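/- arXiv:1505.07485 — 8 statements merged into one kernel-verified Lean document; each statement's English description precedes it below -/
import Mathlib

section
/- Let G be a finite connected simple graph and v a vertex of G. In the game Trap (players alternately move a token along edges to previously unvisited vertices; a player who cannot move loses), the first player has a winning strategy starting from v if and only if v is contained in every maximum-cardinality matching of G. -/
/-!
Trap: players alternately move a token along edges of `G` to previously
unvisited vertices (restricted to an allowed set `A`); a player who cannot
move loses.  The history is a list of visited vertices, newest first.
The first player moves at histories of odd length.
-/

variable {V : Type*}

/-- A move to `w` is legal from history `h` if `w` is adjacent to the current
vertex (the head of `h`), has not been visited, and is allowed. -/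
def TrapLegal (G : SimpleGraph V) (A : Set V) (h : List V) (w : V) : Prop :=
  ∃ c, h.head? = some c ∧ G.Adj c w ∧ w ∉ h ∧ w ∈ A

open Classical in
/-- The evolution of the game when the first player uses strategy `σ` and the
second player uses strategy `τ`, starting from `v`.  If the strategy of the
player to move chooses an illegal move, the history freezes. -/
noncomputable def trapPlay (G : SimpleGraph V) (A : Set V) (σ τ : List V → V) (v : V) :
    ℕ → List V
  | 0 => [v]
  | n + 1 =>
    let h := trapPlay G A σ τ v n
    let w := if h.length % 2 = 1 then σ h else τ h
    if TrapLegal G A h w then w :: h else h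

/-- The first player has a winning strategy: a strategy `σ` such that against any
strategy `τ` of the second player, at some point it is the second player's turn
(the history has even length) and the second player has no legal move to make
(in particular, the move suggested by `τ` is not legal). -/
def TrapFirstWins (G : SimpleGraph V) (A : Set V) (v : V) : Prop :=
  ∃ σ : List V → V, ∀ τ : List V → V, ∃ n : ℕ,
    (trapPlay G A σ τ v n).length % 2 = 0 ∧
    ¬ TrapLegal G A (trapPlay G A σ τ v n) (τ (trapPlay G A σ τ v n))

/-- `M` is a maximum-cardinality matching of `G`. -/
def IsMaxMatching (G : SimpleGraph V) (M : G.Subgraph) : Prop :=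
  M.IsMatching ∧ ∀ N : G.Subgraph, N.IsMatching → N.verts.ncard ≤ M.verts.ncard

/-!
The winning player moves to the partner of the current vertex in a fixed maximum matching `M`.
At that player's turn the play is a walk from its start that alternates between `M`-edges and
other edges, so every visited vertex except the current one (and an exposed start) is matched
along the walk, and the partner of the current vertex, when it exists, is unvisited. If the
current vertex were exposed, trading the `M`-edges of the walk for the others would give a
maximum matching that avoids `v` when the first player follows `M`, and a larger matching when
the second player follows `M` from a vertex `v` that `M` misses.
-/

lemma exists_isMaxMatching [Finite V] (G : SimpleGraph V) :
    ∃ M : G.Subgraph, IsMaxMatching G M := by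
  obtain ⟨M, hM, hmax⟩ := Set.exists_max_image {M : G.Subgraph | M.IsMatching}
    (fun M ↦ M.verts.ncard) (Set.toFinite _) ⟨⊥, fun _ h ↦ h.elim⟩
  exact ⟨M, hM, hmax⟩

namespace SimpleGraph.Subgraph

variable {G : SimpleGraph V} {M : G.Subgraph} {s : Set V} {a b c u w : V}

open Classical in
noncomputable def partner (M : G.Subgraph) (u : V) : V :=
  if h : ∃ w, M.Adj u w then h.choose else u

lemma IsMatching.adj_partner (hM : M.IsMatching) (hu : u ∈ M.verts) :
    M.Adj u (M.partner u) := by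
  have h : ∃ w, M.Adj u w := (hM hu).exists
  rw [partner, dif_pos h]
  exact h.choose_spec

lemma IsMatching.deleteVerts (hM : M.IsMatching) (hs : ∀ ⦃x y⦄, M.Adj x y → x ∈ s → y ∈ s) :
    (M.deleteVerts s).IsMatching := by
  rintro x ⟨hxM, hxs⟩
  obtain ⟨y, hxy, huniq⟩ := hM hxM
  refine ⟨y, deleteVerts_adj.2 ⟨hxM, hxs, M.edge_vert hxy.symm, fun hys ↦ hxs (hs hxy.symm hys),
    hxy⟩, fun z hz ↦ huniq z (deleteVerts_adj.1 hz).2.2.2.2⟩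

lemma IsMatching.sup_subgraphOfAdj (hM : M.IsMatching) (hu : u ∉ M.verts) (hw : w ∉ M.verts)
    (huw : G.Adj u w) : (M ⊔ G.subgraphOfAdj huw).IsMatching :=
  hM.sup (.subgraphOfAdj huw) <| by
    rw [hM.support_eq_verts, support_subgraphOfAdj, Set.disjoint_insert_right,
      Set.disjoint_singleton_right]
    exact ⟨hu, hw⟩

lemma IsMatching.exists_exchange (hM : M.IsMatching) (hab : M.Adj a b) (hbc : G.Adj b c)
    (hc : c ∉ M.verts) :
    ∃ M' : G.Subgraph, M'.IsMatching ∧ M'.verts = insert c (M.verts \ {a}) ∧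
      ∀ ⦃x y⦄, M.Adj x y → x ≠ a → y ≠ a → M'.Adj x y := by
  have hb : b ∈ M.verts := M.edge_vert hab.symm
  have hclosed : ∀ ⦃x y⦄, M.Adj x y → x ∈ ({a, b} : Set V) → y ∈ ({a, b} : Set V) := by
    rintro x y hxy (rfl | rfl)
    · exact .inr (hM.eq_of_adj_left hab hxy).symm
    · exact .inl (hM.eq_of_adj_left hab.symm hxy).symm
  have hdel := hM.deleteVerts hclosed
  refine ⟨M.deleteVerts {a, b} ⊔ G.subgraphOfAdj hbc, hdel.sup (.subgraphOfAdj hbc) ?_, ?_, ?_⟩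
  · rw [hdel.support_eq_verts, support_subgraphOfAdj, Set.disjoint_insert_right,
      Set.disjoint_singleton_right]
    exact ⟨fun h ↦ h.2 (.inr rfl), fun h ↦ hc h.1⟩
  · ext x
    simp only [verts_sup, deleteVerts_verts, subgraphOfAdj_verts, Set.mem_union, Set.mem_sdiff,
      Set.mem_insert_iff, Set.mem_singleton_iff]
    have hab' := hab.ne
    grind
  · intro x y hxy hxa hya
    have hxb : x ≠ b := by rintro rfl; exact hya (hM.eq_of_adj_left hab.symm hxy).symm
    have hyb : y ≠ b := by rintro rfl; exact hxa (hM.eq_of_adj_right hab hxy).symm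
    exact sup_adj.2 <| .inl <| deleteVerts_adj.2
      ⟨M.edge_vert hxy, by simp [hxa, hxb], M.edge_vert hxy.symm, by simp [hya, hyb], hxy⟩

-- `M.AltChain s base c t`: the list `c :: t` (newest vertex first) arises from `s :: base` by
-- repeatedly appending an `M`-edge `a b` followed by a `G`-edge `b c`.
inductive AltChain (M : G.Subgraph) (s : V) (base : List V) : V → List V → Prop
  | start : AltChain M s base s base
  | cons {a b c : V} {l : List V} :
      AltChain M s base a l → M.Adj a b → G.Adj b c → AltChain M s base c (b :: a :: l)

namespace AltChain

variable {s : V} {base t : List V}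

lemma suffix (hp : M.AltChain s base c t) : base <:+ t := by
  induction hp with
  | start => exact List.suffix_refl _
  | cons _ _ _ ih => exact ih.trans ((List.suffix_cons _ _).trans (List.suffix_cons _ _))

lemma mem_base_or_exists_adj (hp : M.AltChain s base c t) :
    ∀ x ∈ t, x ∈ base ∨ ∃ y ∈ t, M.Adj x y := by
  induction hp with
  | start => exact fun x hx ↦ .inl hx
  | @cons a b c l _ hab _ ih =>
    intro x hx
    rcases List.mem_cons.1 hx with rfl | hx
    · exact .inr ⟨a, by simp, hab.symm⟩
    rcases List.mem_cons.1 hx with rfl | hx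
    · exact .inr ⟨b, by simp, hab⟩
    exact (ih x hx).imp_right fun ⟨y, hy, hxy⟩ ↦ ⟨y, by simp [hy], hxy⟩

lemma notMem_of_adj (hp : M.AltChain s base c t) (hM : M.IsMatching) (hnd : (c :: t).Nodup)
    (hbase : ∀ x ∈ base, x ∉ M.verts) (hcw : M.Adj c w) : w ∉ c :: t := by
  intro hw
  rcases List.mem_cons.1 hw with rfl | hw
  · exact hcw.ne rfl
  rcases hp.mem_base_or_exists_adj w hw with hwb | ⟨y, hy, hwy⟩
  · exact hbase w hwb (M.edge_vert hcw.symm)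
  · rw [hM.eq_of_adj_left hwy hcw.symm] at hy
    exact (List.nodup_cons.1 hnd).1 hy

lemma trapLegal_partner (hp : M.AltChain s base c t) (hM : M.IsMatching) (hnd : (c :: t).Nodup)
    (hbase : ∀ x ∈ base, x ∉ M.verts) (hc : c ∈ M.verts) :
    TrapLegal G Set.univ (c :: t) (M.partner c) :=
  ⟨c, rfl, M.adj_sub (hM.adj_partner hc), hp.notMem_of_adj hM hnd hbase (hM.adj_partner hc),
    trivial⟩

lemma exists_matching [Finite V] (hp : M.AltChain s base c t) (hM : M.IsMatching)
    (hnd : (c :: t).Nodup) (hc : c ∉ M.verts) :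
    ∃ M' : G.Subgraph, M'.IsMatching ∧ M'.verts.ncard = M.verts.ncard ∧ s ∉ M'.verts ∧
      M'.verts ⊆ insert c M.verts := by
  -- The induction trades one `M`-edge at a time, so it runs over matchings `N` that only
  -- contain the `M`-edges of the part of the chain not yet traded.
  suffices ∀ N : G.Subgraph, N.IsMatching → (∀ x ∈ t, ∀ y ∈ t, M.Adj x y → N.Adj x y) →
      c ∉ N.verts → ∃ M' : G.Subgraph, M'.IsMatching ∧ M'.verts.ncard = N.verts.ncard ∧
        s ∉ M'.verts ∧ M'.verts ⊆ insert c N.verts from this M hM (fun _ _ _ _ h ↦ h) hc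
  clear hM hc
  induction hp with
  | start => exact fun N hN _ hs ↦ ⟨N, hN, rfl, hs, Set.subset_insert _ _⟩
  | @cons a b c l _ hab hbc ih =>
    intro N hN hMN hc
    simp only [List.nodup_cons, List.mem_cons, not_or] at hnd
    obtain ⟨⟨-, hca, -⟩, -, hal, hnd⟩ := hnd
    have hNab : N.Adj a b := hMN a (by simp) b (by simp) hab
    obtain ⟨N₁, hN₁, hverts, hkeep⟩ := hN.exists_exchange hNab hbc hc
    have hkeep' : ∀ x ∈ l, ∀ y ∈ l, M.Adj x y → N₁.Adj x y := fun x hx y hy hxy ↦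
      hkeep (hMN x (by simp [hx]) y (by simp [hy]) hxy) (ne_of_mem_of_not_mem hx hal)
        (ne_of_mem_of_not_mem hy hal)
    have ha : a ∉ N₁.verts := by simp [hverts, Ne.symm hca]
    obtain ⟨M', hM', hcard, hs, hsub⟩ := ih (List.nodup_cons.2 ⟨hal, hnd⟩) N₁ hN₁ hkeep' ha
    refine ⟨M', hM', ?_, hs, hsub.trans ?_⟩
    · rw [hcard, hverts, Set.ncard_exchange hc (N.edge_vert hNab)]
    · rw [hverts]
      rintro x (rfl | rfl | ⟨hx, -⟩)
      exacts [.inr (N.edge_vert hNab), .inl rfl, .inr hx]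

lemma head_mem_of_forall_isMaxMatching [Finite V] (hp : M.AltChain s base c t)
    (hmax : IsMaxMatching G M) (hall : ∀ N : G.Subgraph, IsMaxMatching G N → s ∈ N.verts)
    (hnd : (c :: t).Nodup) : c ∈ M.verts := by
  by_contra hc
  obtain ⟨M', hM', hcard, hs, -⟩ := hp.exists_matching hmax.1 hnd hc
  exact hs (hall M' ⟨hM', fun N hN ↦ hcard ▸ hmax.2 N hN⟩)

lemma head_mem_of_adj_notMem [Finite V] {v : V} (hp : M.AltChain s base c t)
    (hmax : IsMaxMatching G M) (hnd : (c :: t).Nodup) (hvs : G.Adj v s) (hv : v ∉ M.verts)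
    (hvc : v ≠ c) : c ∈ M.verts := by
  by_contra hc
  obtain ⟨M', hM', hcard, hs, hsub⟩ := hp.exists_matching hmax.1 hnd hc
  have hv' : v ∉ M'.verts := fun h ↦ (hsub h).elim hvc hv
  have hbig := hmax.2 _ (hM'.sup_subgraphOfAdj hv' hs hvs)
  rw [verts_sup, subgraphOfAdj_verts, Set.union_insert, Set.union_singleton,
    Set.ncard_insert_of_notMem (by simp [hvs.ne, hv']), Set.ncard_insert_of_notMem hs] at hbig
  omega

end AltChain

end SimpleGraph.Subgraph

section Game

variable {G : SimpleGraph V} {A : Set V} {σ τ : List V → V} {v : V} {n : ℕ} {h : List V}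

open Classical in
lemma trapPlay_succ_of_odd (hn : trapPlay G A σ τ v n = h) (hodd : h.length % 2 = 1) :
    trapPlay G A σ τ v (n + 1) = if TrapLegal G A h (σ h) then σ h :: h else h := by
  subst hn
  simp only [trapPlay, hodd, if_true]

open Classical in
lemma trapPlay_succ_of_even (hn : trapPlay G A σ τ v n = h) (heven : h.length % 2 = 0) :
    trapPlay G A σ τ v (n + 1) = if TrapLegal G A h (τ h) then τ h :: h else h := by
  subst hn
  simp only [trapPlay, heven, zero_ne_one, if_false]

lemma TrapLegal.notMem {w : V} (hw : TrapLegal G A h w) : w ∉ h := by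
  obtain ⟨_, -, -, hw, -⟩ := hw
  exact hw

lemma trapPlay_nodup (σ τ : List V → V) (v : V) (n : ℕ) : (trapPlay G A σ τ v n).Nodup := by
  induction n with
  | zero => exact List.nodup_singleton v
  | succ n ih =>
    rcases Nat.mod_two_eq_zero_or_one (trapPlay G A σ τ v n).length with heven | hodd
    · rw [trapPlay_succ_of_even rfl heven]
      split_ifs with hw
      exacts [List.nodup_cons.2 ⟨hw.notMem, ih⟩, ih]
    · rw [trapPlay_succ_of_odd rfl hodd]
      split_ifs with hw
      exacts [List.nodup_cons.2 ⟨hw.notMem, ih⟩, ih]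

theorem trapFirstWins_of_invariant [Finite V] (σ : List V → V) (I : List V → Prop) (hv : I [v])
    (hmove : ∀ h, h.Nodup → I h → TrapLegal G A h (σ h))
    (hreply : ∀ h w, h.Nodup → I h → TrapLegal G A (σ h :: h) w → I (w :: σ h :: h)) :
    TrapFirstWins G A v := by
  refine ⟨σ, fun τ ↦ ?_⟩
  by_contra! hτ
  have hround : ∀ m, I (trapPlay G A σ τ v (2 * m)) ∧
      (trapPlay G A σ τ v (2 * m)).length = 2 * m + 1 := by
    intro m
    induction m with
    | zero => exact ⟨hv, rfl⟩
    | succ m ih =>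
      generalize hn : trapPlay G A σ τ v (2 * m) = h at ih
      obtain ⟨hI, hlen⟩ := ih
      have hnd : h.Nodup := hn ▸ trapPlay_nodup σ τ v _
      have h₁ : trapPlay G A σ τ v (2 * m + 1) = σ h :: h := by
        rw [trapPlay_succ_of_odd hn (by omega), if_pos (hmove h hnd hI)]
      have heven : (σ h :: h).length % 2 = 0 := by simp [hlen]; omega
      have hlegal : TrapLegal G A (σ h :: h) (τ (σ h :: h)) := h₁ ▸ hτ _ (h₁ ▸ heven)
      rw [show 2 * (m + 1) = 2 * m + 1 + 1 by ring, trapPlay_succ_of_even h₁ heven, if_pos hlegal]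
      exact ⟨hreply h _ hnd hI hlegal, by simp [hlen]⟩
  have hle := (trapPlay_nodup (G := G) (A := A) σ τ v (2 * Nat.card V)).length_le_natCard
  rw [(hround _).2] at hle
  omega

theorem not_trapFirstWins_of_invariant (τ : List V → V) (I : List V → Prop)
    (hstart : ∀ w, TrapLegal G A [v] w → I [w, v])
    (hmove : ∀ h, h.Nodup → I h → TrapLegal G A h (τ h))
    (hreply : ∀ h w, h.Nodup → I h → TrapLegal G A (τ h :: h) w → I (w :: τ h :: h)) :
    ¬ TrapFirstWins G A v := by
  rintro ⟨σ, hσ⟩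
  have hturns : ∀ n, let h := trapPlay G A σ τ v n
      (h.length % 2 = 0 → I h) ∧ (h.length % 2 = 1 → h = [v] ∨ ∃ h', I h' ∧ h = τ h' :: h') := by
    intro n
    induction n with
    | zero => exact ⟨by simp [trapPlay], fun _ ↦ .inl rfl⟩
    | succ n ih =>
      generalize hn : trapPlay G A σ τ v n = h at ih
      obtain ⟨hI, hodd⟩ := ih
      have hnd : h.Nodup := hn ▸ trapPlay_nodup σ τ v n
      rcases Nat.mod_two_eq_zero_or_one h.length with heven | hodd'
      · rw [trapPlay_succ_of_even hn heven, if_pos (hmove h hnd (hI heven))]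
        exact ⟨by simp; omega, fun _ ↦ .inr ⟨h, hI heven, rfl⟩⟩
      rw [trapPlay_succ_of_odd hn hodd']
      split_ifs with hlegal
      · refine ⟨fun _ ↦ ?_, by simp; omega⟩
        rcases hodd hodd' with rfl | ⟨h', hI', rfl⟩
        · exact hstart _ hlegal
        · exact hreply h' _ (List.nodup_cons.1 hnd).2 hI' hlegal
      · exact ⟨by omega, fun _ ↦ hodd hodd'⟩
  obtain ⟨n, heven, hstuck⟩ := hσ τ
  exact hstuck (hmove _ (trapPlay_nodup σ τ v n) ((hturns n).1 heven))

end Game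

theorem trapFirstWins_of_forall_isMaxMatching_mem [Finite V] {G : SimpleGraph V} {v : V}
    (hall : ∀ M : G.Subgraph, IsMaxMatching G M → v ∈ M.verts) : TrapFirstWins G Set.univ v := by
  obtain ⟨M, hmax⟩ := exists_isMaxMatching G
  have hmem {c t} (hp : M.AltChain v [] c t) (hnd : (c :: t).Nodup) : c ∈ M.verts :=
    hp.head_mem_of_forall_isMaxMatching hmax hall hnd
  refine trapFirstWins_of_invariant (fun h ↦ M.partner (h.headD v))
    (fun h ↦ ∃ c t, h = c :: t ∧ M.AltChain v [] c t) ⟨v, [], rfl, .start⟩ ?_ ?_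
  · rintro _ hnd ⟨c, t, rfl, hp⟩
    exact hp.trapLegal_partner hmax.1 hnd (by simp) (hmem hp hnd)
  · rintro _ w hnd ⟨c, t, rfl, hp⟩ ⟨_, ⟨⟩, hadj, -⟩
    exact ⟨w, _, rfl, hp.cons (hmax.1.adj_partner (hmem hp hnd)) hadj⟩

theorem not_trapFirstWins_of_notMem_isMaxMatching [Finite V] {G : SimpleGraph V} {v : V}
    {M : G.Subgraph} (hmax : IsMaxMatching G M) (hv : v ∉ M.verts) :
    ¬ TrapFirstWins G Set.univ v := by
  have hmem {s c t} (hvs : G.Adj v s) (hp : M.AltChain s [v] c t) (hnd : (c :: t).Nodup) :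
      c ∈ M.verts :=
    hp.head_mem_of_adj_notMem hmax hnd hvs hv fun hvc ↦
      (List.nodup_cons.1 hnd).1 (hvc ▸ hp.suffix.subset (List.mem_singleton_self v))
  refine not_trapFirstWins_of_invariant (fun h ↦ M.partner (h.headD v))
    (fun h ↦ ∃ s c t, h = c :: t ∧ G.Adj v s ∧ M.AltChain s [v] c t) ?_ ?_ ?_
  · rintro w ⟨_, ⟨⟩, hvw, -⟩
    exact ⟨w, w, [v], rfl, hvw, .start⟩
  · rintro _ hnd ⟨s, c, t, rfl, hvs, hp⟩
    exact hp.trapLegal_partner hmax.1 hnd (by simpa using hv) (hmem hvs hp hnd)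
  · rintro _ w hnd ⟨s, c, t, rfl, hvs, hp⟩ ⟨_, ⟨⟩, hadj, -⟩
    exact ⟨s, w, _, rfl, hvs, hp.cons (hmax.1.adj_partner (hmem hvs hp hnd)) hadj⟩

theorem trap_firstWins_iff_mem_every_maxMatching_general [Fintype V]
    (G : SimpleGraph V) (v : V) :
    TrapFirstWins G Set.univ v ↔
      ∀ M : G.Subgraph, IsMaxMatching G M → v ∈ M.verts :=
  ⟨fun hwin _ hmax ↦ by_contra fun hv ↦ not_trapFirstWins_of_notMem_isMaxMatching hmax hv hwin,
    trapFirstWins_of_forall_isMaxMatching_mem⟩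

/-- On a finite connected simple graph, the first player wins
Trap from `v` if and only if `v` is contained in every maximum matching. -/
theorem trap_firstWins_iff_mem_every_maxMatching [Fintype V]
    (G : SimpleGraph V) (hG : G.Connected) (v : V) :
    TrapFirstWins G Set.univ v ↔
      ∀ M : G.Subgraph, IsMaxMatching G M → v ∈ M.verts :=
  trap_firstWins_iff_mem_every_maxMatching_general G v
end

section
/- In a finite simple bipartite graph, a vertex is contained in every maximum-cardinality matching if and only if it is absent from some maximum-cardinality independent set. -/
/-
König's theorem, in the form needed here: if `I` is a maximum independent set of a bipartite
graph, Hall's condition holds for the edges between `Iᶜ` and `I`, since a set `T ⊆ Iᶜ` with too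
few neighbours in `I` could replace those neighbours and enlarge `I`. So some matching covers
`Iᶜ` using only edges from `Iᶜ` to `I`, and `2|Iᶜ| ≤ |V(M)|`. Conversely each edge of a matching
`M` has an endpoint outside any independent `J`, so `|V(M)| ≤ 2|Jᶜ|`, with equality only if
`Jᶜ ⊆ V(M)`.

If `v ∉ I` for a maximum `I`, every maximum matching meets the bound against `I`, hence covers
`v`. If `v` lies in every maximum matching, apply König's theorem to `G` with the edges at `v`
deleted: its matching misses `v`, so it is at least two vertices short of a maximum matching of
`G`, which makes the independent set it comes with, minus `v`, maximum in `G`.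
-/

variable {V : Type*}

/-- `I` is an independent set of `G`. -/
def IsIndep (G : SimpleGraph V) (I : Set V) : Prop :=
  ∀ a ∈ I, ∀ b ∈ I, ¬ G.Adj a b

/-- `I` is a maximum-cardinality independent set of `G`. -/
def IsMaxIndep (G : SimpleGraph V) (I : Set V) : Prop :=
  IsIndep G I ∧ ∀ J : Set V, IsIndep G J → J.ncard ≤ I.ncard

open SimpleGraph Set

namespace SimpleGraph.Subgraph.IsMatching

variable {G : SimpleGraph V}

lemma notMem_verts_of_deleteIncidenceSet {v : V} {M : (G.deleteIncidenceSet v).Subgraph}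
    (hM : M.IsMatching) : v ∉ M.verts := by
  intro hv
  obtain ⟨w, hvw, -⟩ := hM hv
  exact (deleteIncidenceSet_adj.1 (M.adj_sub hvw)).2.1 rfl

variable [Finite V] {M : G.Subgraph}

lemma ncard_verts_inter_le_ncard_verts_sdiff (hM : M.IsMatching) {s : Set V}
    (hs : ∀ ⦃x y⦄, M.Adj x y → x ∈ s → y ∉ s) :
    (M.verts ∩ s).ncard ≤ (M.verts \ s).ncard := by
  choose! partner hpartner using fun x (hx : x ∈ M.verts ∩ s) => (hM hx.1).exists
  refine ncard_le_ncard_of_injOn partner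
    (fun x hx => ⟨M.edge_vert (hpartner x hx).symm, hs (hpartner x hx) hx.2⟩) ?_
  intro x hx y hy hxy
  exact hM.eq_of_adj_right (hpartner x hx) (hxy ▸ hpartner y hy)

lemma even_ncard_verts (hM : M.IsMatching) : Even M.verts.ncard := by
  have := Fintype.ofFinite M.verts
  rw [ncard_eq_toFinset_card']
  exact hM.even_card

end SimpleGraph.Subgraph.IsMatching

lemma exists_isMaxIndep [Finite V] (G : SimpleGraph V) : ∃ I, IsMaxIndep G I := by
  obtain ⟨I, hI, hmax⟩ := Set.exists_max_image {I | IsIndep G I} ncard (toFinite _)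
    ⟨∅, fun _ h => h.elim⟩
  exact ⟨I, hI, hmax⟩

section Indep

variable {G : SimpleGraph V}

lemma IsIndep.sdiff_singleton_of_deleteIncidenceSet {J : Set V} {v : V}
    (hJ : IsIndep (G.deleteIncidenceSet v) J) : IsIndep G (J \ {v}) :=
  fun a ha b hb hab => hJ a ha.1 b hb.1 (deleteIncidenceSet_adj.2 ⟨hab, ha.2, hb.2⟩)

variable [Finite V] {M : G.Subgraph} {J : Set V}

lemma IsIndep.ncard_verts_inter_le_ncard_verts_sdiff (hJ : IsIndep G J) (hM : M.IsMatching) :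
    (M.verts ∩ J).ncard ≤ (M.verts \ J).ncard :=
  hM.ncard_verts_inter_le_ncard_verts_sdiff fun x y hxy hx hy => hJ x hx y hy (M.adj_sub hxy)

lemma IsIndep.ncard_verts_le (hJ : IsIndep G J) (hM : M.IsMatching) :
    M.verts.ncard ≤ 2 * Jᶜ.ncard := by
  have hsplit := hJ.ncard_verts_inter_le_ncard_verts_sdiff hM
  have hdiff : (M.verts \ J).ncard ≤ Jᶜ.ncard := ncard_le_ncard (sdiff_subset_compl _ _)
  have := ncard_inter_add_ncard_sdiff_eq_ncard M.verts J
  omega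

lemma IsIndep.compl_subset_verts (hJ : IsIndep G J) (hM : M.IsMatching)
    (hle : 2 * Jᶜ.ncard ≤ M.verts.ncard) : Jᶜ ⊆ M.verts := by
  have hsplit := hJ.ncard_verts_inter_le_ncard_verts_sdiff hM
  have := ncard_inter_add_ncard_sdiff_eq_ncard M.verts J
  have hdiff : M.verts \ J = Jᶜ := eq_of_subset_of_ncard_le (sdiff_subset_compl _ _) (by omega)
  exact hdiff ▸ sdiff_subset

end Indep

section Hall

variable [Finite V] {G : SimpleGraph V} {I T : Set V}

lemma IsMaxIndep.ncard_le_ncard_biUnion_neighborSet_inter (hI : IsMaxIndep G I)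
    (hT : IsIndep G T) (hTI : Disjoint T I) :
    T.ncard ≤ (⋃ x ∈ T, G.neighborSet x ∩ I).ncard := by
  set N := ⋃ x ∈ T, G.neighborSet x ∩ I
  have hswap : IsIndep G ((I \ N) ∪ T) := by
    rintro a (⟨haI, haN⟩ | haT) b (⟨hbI, hbN⟩ | hbT) hab
    · exact hI.1 a haI b hbI hab
    · exact haN (mem_biUnion hbT ⟨hab.symm, haI⟩)
    · exact hbN (mem_biUnion haT ⟨hab, hbI⟩)
    · exact hT a haT b hbT hab
  have hNI : N ⊆ I := iUnion₂_subset fun _ _ => inter_subset_right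
  have hle := hI.2 _ hswap
  rw [ncard_union_eq (hTI.symm.mono_left sdiff_subset)] at hle
  have := ncard_sdiff_add_ncard_of_subset hNI
  omega

lemma IsMaxIndep.ncard_le_ncard_biUnion_neighborSet_inter_of_isBipartiteWith {s t : Set V}
    (hG : G.IsBipartiteWith s t) (hI : IsMaxIndep G I) (hTI : Disjoint T I) :
    T.ncard ≤ (⋃ x ∈ T, G.neighborSet x ∩ I).ncard := by
  have hin : (T ∩ s).ncard ≤ (⋃ x ∈ T ∩ s, G.neighborSet x ∩ I).ncard :=
    hI.ncard_le_ncard_biUnion_neighborSet_inter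
      (fun a ha b hb hab => Set.disjoint_left.1 hG.disjoint hb.2 (hG.mem_of_mem_adj ha.2 hab))
      (hTI.mono_left inter_subset_left)
  have hout : (T \ s).ncard ≤ (⋃ x ∈ T \ s, G.neighborSet x ∩ I).ncard :=
    hI.ncard_le_ncard_biUnion_neighborSet_inter
      (fun a ha b hb hab => (hG.mem_of_adj hab).elim (fun h => ha.2 h.1) (fun h => hb.2 h.2))
      (hTI.mono_left sdiff_subset)
  have hdisj : Disjoint (⋃ x ∈ T ∩ s, G.neighborSet x ∩ I)
      (⋃ x ∈ T \ s, G.neighborSet x ∩ I) := by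
    simp only [Set.disjoint_left, mem_iUnion₂]
    rintro y ⟨x, hx, hxy, -⟩ ⟨x', hx', hx'y, -⟩
    have hyt : y ∈ t := hG.mem_of_mem_adj hx.2 hxy
    have hys : y ∈ s := ((hG.mem_of_adj hx'y).resolve_left fun h => hx'.2 h.1).2
    exact Set.disjoint_left.1 hG.disjoint hys hyt
  calc T.ncard = (T ∩ s).ncard + (T \ s).ncard := (ncard_inter_add_ncard_sdiff_eq_ncard T s).symm
    _ ≤ _ := add_le_add hin hout
    _ = _ := (ncard_union_eq hdisj).symm
    _ ≤ _ := ncard_le_ncard (union_subset (biUnion_subset_biUnion_left inter_subset_left)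
      (biUnion_subset_biUnion_left sdiff_subset))

lemma IsMaxIndep.exists_isMatching_compl_subset_verts (hG : G.IsBipartite) (hI : IsMaxIndep G I) :
    ∃ M : G.Subgraph, M.IsMatching ∧ Iᶜ ⊆ M.verts ∧ ∀ ⦃x y⦄, M.Adj x y → x ∈ Iᶜ → y ∉ Iᶜ := by
  classical
  have := Fintype.ofFinite V
  obtain ⟨s, t, hst⟩ := hG.exists_isBipartiteWith
  have hnbr : ∀ x ∈ Iᶜ, (G.between Iᶜ I).neighborSet x = G.neighborSet x ∩ I := by
    intro x hx
    ext y
    simp_all [between_adj]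
  obtain ⟨M, hIM, hM⟩ := exists_isMatching_of_forall_ncard_le
    (between_isBipartiteWith disjoint_compl_left) fun T hT => by
      rw [iUnion₂_congr fun x hx => hnbr x (hT hx)]
      exact hI.ncard_le_ncard_biUnion_neighborSet_inter_of_isBipartiteWith hst
        (subset_compl_iff_disjoint_right.1 hT)
  refine ⟨M.map (Hom.ofLE between_le), hM.map_ofLE between_le, by simpa using hIM, ?_⟩
  rintro x y ⟨a, b, hab, rfl, rfl⟩ hx
  have := (between_adj.1 (M.adj_sub hab)).2
  simp only [mem_compl_iff] at hx this ⊢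
  tauto

end Hall

lemma IsMaxIndep.exists_isMatching_two_mul_ncard_compl_le [Finite V] {G : SimpleGraph V}
    {I : Set V} (hG : G.IsBipartite) (hI : IsMaxIndep G I) :
    ∃ M : G.Subgraph, M.IsMatching ∧ 2 * Iᶜ.ncard ≤ M.verts.ncard := by
  obtain ⟨M, hM, hIM, hcross⟩ := hI.exists_isMatching_compl_subset_verts hG
  have hsplit := hM.ncard_verts_inter_le_ncard_verts_sdiff hcross
  have := ncard_inter_add_ncard_sdiff_eq_ncard M.verts Iᶜ
  rw [inter_eq_right.2 hIM] at hsplit this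
  exact ⟨M, hM, by omega⟩

/-- In a finite simple bipartite graph, a vertex is contained
in every maximum matching if and only if it is absent from some maximum
independent set. -/
theorem mem_every_maxMatching_iff_not_mem_some_maxIndep [Fintype V]
    (G : SimpleGraph V) (hbip : G.Colorable 2) (v : V) :
    (∀ M : G.Subgraph, IsMaxMatching G M → v ∈ M.verts) ↔
      ∃ I : Set V, IsMaxIndep G I ∧ v ∉ I := by
  constructor
  · intro hcover
    have hle := G.deleteIncidenceSet_le v
    obtain ⟨J, hJ⟩ := exists_isMaxIndep (G.deleteIncidenceSet v)
    obtain ⟨M, hM, hMJ⟩ := hJ.exists_isMatching_two_mul_ncard_compl_le (hbip.mono_left hle)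
    have hMG : (M.map (Hom.ofLE hle)).IsMatching := hM.map_ofLE hle
    obtain ⟨N, hN, hMN⟩ : ∃ N : G.Subgraph, N.IsMatching ∧ M.verts.ncard < N.verts.ncard := by
      by_contra! h
      exact hM.notMem_verts_of_deleteIncidenceSet (by simpa using hcover _ ⟨hMG, by simpa using h⟩)
    obtain ⟨m, hm⟩ := hM.even_ncard_verts
    obtain ⟨n, hn⟩ := hN.even_ncard_verts
    refine ⟨J \ {v}, ⟨hJ.1.sdiff_singleton_of_deleteIncidenceSet, fun K hK => ?_⟩, fun h => h.2 rfl⟩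
    have hNK := hK.ncard_verts_le hN
    have hJv : J.ncard ≤ (J \ {v}).ncard + 1 := by
      simpa using ncard_le_ncard_sdiff_add_ncard J {v}
    have := ncard_add_ncard_compl J
    have := ncard_add_ncard_compl K
    omega
  · rintro ⟨I, hI, hvI⟩ M hM
    obtain ⟨M₀, hM₀, hM₀I⟩ := hI.exists_isMatching_two_mul_ncard_compl_le hbip
    exact hI.1.compl_subset_verts hM.1 (hM₀I.trans (hM.2 M₀ hM₀)) hvI
end

section
/- Let G be a finite bipartite graph whose odd vertices are each declared open or closed, and let M be a matching of G that matches all open odd vertices. Let v be an even vertex matched in M. If there is an M-alternating path starting from v that contains a closed odd vertex, then there exists a matching M_v of G that matches all open odd vertices but does not match v. -/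
/-!
Along the alternating path the vertices alternate between even and odd, so any closed vertex
`f k` on it sits at an odd index. Switching `M` along the segment `f 0, …, f k` (dropping its
`M`-edges `f (2i) f (2i+1)` and adding the edges `f (2i+1) f (2i+2)`) yields a matching whose
vertex set is that of `M` with exactly `v = f 0` and the closed vertex `f k` removed.
-/

variable {V : Type*}

namespace SimpleGraph

variable {G : SimpleGraph V}

theorem side_iff_odd_of_path {p : V → Prop} (hbip : ∀ u w : V, G.Adj u w → (p u ↔ ¬ p w))
    {f : ℕ → V} {l : ℕ} (h0 : ¬ p (f 0))
    (hadj : ∀ i, i + 1 ≤ l → G.Adj (f i) (f (i + 1))) :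
    ∀ i ≤ l, (p (f i) ↔ Odd i) := by
  intro i
  induction i with
  | zero => simpa using h0
  | succ i ih =>
    intro hi
    rw [hbip _ _ (hadj i hi).symm, ih (by omega), Nat.odd_add_one]

namespace Subgraph

variable {M : G.Subgraph}

theorem IsMatching.deleteVerts_pair_adj (hM : M.IsMatching) {a b x y : V} (hab : M.Adj a b)
    (hxy : M.Adj x y) (hx : x ∉ ({a, b} : Set V)) : (M.deleteVerts {a, b}).Adj x y := by
  have hy : y ∉ ({a, b} : Set V) := by
    rintro (rfl | rfl)
    exacts [hx (.inr (hM.eq_of_adj_right hxy hab.symm)), hx (.inl (hM.eq_of_adj_right hxy hab))]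
  exact deleteVerts_adj.2 ⟨hxy.fst_mem, hx, hxy.snd_mem, hy, hxy⟩

theorem IsMatching.deleteVerts_pair (hM : M.IsMatching) {a b : V} (hab : M.Adj a b) :
    (M.deleteVerts {a, b}).IsMatching := by
  rintro x ⟨hxM, hxab⟩
  obtain ⟨y, hxy, huniq⟩ := hM hxM
  exact ⟨y, hM.deleteVerts_pair_adj hab hxy hxab,
    fun z hz => huniq z (deleteVerts_adj.1 hz).2.2.2.2⟩

theorem IsMatching.exists_isMatching_verts_eq_sdiff_ends (hM : M.IsMatching) (f : ℕ → V)
    (j : ℕ) (hinj : Set.InjOn f (Set.Iic (2 * j + 1)))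
    (hadj : ∀ i < 2 * j + 1, G.Adj (f i) (f (i + 1)))
    (hMadj : ∀ i < 2 * j + 1, Even i → M.Adj (f i) (f (i + 1))) :
    ∃ N : G.Subgraph, N.IsMatching ∧ N.verts = M.verts \ {f 0, f (2 * j + 1)} ∧
      ∀ x y, (∀ i ≤ 2 * j + 1, f i ≠ x) → M.Adj x y → N.Adj x y := by
  induction j with
  | zero =>
    have h01 : M.Adj (f 0) (f 1) := hMadj 0 (by omega) Even.zero
    refine ⟨M.deleteVerts {f 0, f 1}, hM.deleteVerts_pair h01, rfl, fun x y hx hxy => ?_⟩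
    refine hM.deleteVerts_pair_adj h01 hxy ?_
    simpa [eq_comm] using And.intro (hx 0 (Nat.zero_le _)) (hx 1 le_rfl)
  | succ j ih =>
    set n := 2 * j + 1
    have hn : 2 * (j + 1) + 1 = n + 2 := by omega
    rw [hn] at hinj hadj hMadj ⊢
    obtain ⟨N, hN, hNverts, hNM⟩ := ih (hinj.mono (Set.Iic_subset_Iic.2 (by omega)))
      (fun i hi => hadj i (by omega)) (fun i hi => hMadj i (by omega))
    have hf {a b : ℕ} (ha : a ≤ n + 2) (hb : b ≤ n + 2) (hab : a ≠ b) : f a ≠ f b :=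
      fun h => hab (hinj ha hb h)
    have hbc : M.Adj (f (n + 1)) (f (n + 2)) := hMadj (n + 1) (by omega) (by simp [n, parity_simps])
    have haM : f n ∈ M.verts := (hMadj (2 * j) (by omega) (by simp)).snd_mem
    have hNbc : N.Adj (f (n + 1)) (f (n + 2)) :=
      hNM _ _ (fun i hi => hf (by omega) (by omega) (by omega)) hbc
    -- trade the `M`-edge `f (n+1) f (n+2)` for the path edge `f n f (n+1)`
    refine ⟨N.deleteVerts {f (n + 1), f (n + 2)} ⊔ G.subgraphOfAdj (hadj n (by omega)),
      ?matching, ?verts, fun x y hx hxy => ?invariant⟩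
    case matching =>
      refine (hN.deleteVerts_pair hNbc).sup (.subgraphOfAdj _) ?_
      refine Set.disjoint_of_subset (support_subset_verts _) (support_subset_verts _) ?_
      rw [deleteVerts_verts, hNverts, subgraphOfAdj_verts, Set.disjoint_insert_right,
        Set.disjoint_singleton_right]
      simp
    case verts =>
      rw [verts_sup, deleteVerts_verts, hNverts, subgraphOfAdj_verts]
      have := hf (a := 0) (b := n) (by omega) (by omega) (by omega)
      have := hf (a := 0) (b := n + 1) (by omega) (by omega) (by omega)
      have := hf (a := n) (b := n + 2) (by omega) (by omega) (by omega)
      have := hf (a := n + 1) (b := n + 2) (by omega) (by omega) (by omega)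
      ext x
      simp only [Set.mem_union, Set.mem_sdiff, Set.mem_insert_iff, Set.mem_singleton_iff]
      grind [hbc.fst_mem]
    case invariant =>
      have hNxy := hNM x y (fun i hi => hx i (by omega)) hxy
      refine sup_adj.2 (.inl (hN.deleteVerts_pair_adj hNbc hNxy ?_))
      simpa [eq_comm] using And.intro (hx (n + 1) (by omega)) (hx (n + 2) le_rfl)

end Subgraph

end SimpleGraph

theorem exists_matching_avoiding_of_alternating_path_general
    (G : SimpleGraph V) (oddV closed : V → Prop)
    (hbip : ∀ u w : V, G.Adj u w → (oddV u ↔ ¬ oddV w))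
    (hco : ∀ u, closed u → oddV u)
    (M : G.Subgraph) (hM : M.IsMatching)
    (hall : ∀ u, oddV u → ¬ closed u → u ∈ M.verts)
    (v : V) (hv : ¬ oddV v)
    (hpath : ∃ (l : ℕ) (f : ℕ → V),
      f 0 = v ∧
      (∀ i j, i ≤ l → j ≤ l → f i = f j → i = j) ∧
      (∀ i, i + 1 ≤ l → G.Adj (f i) (f (i + 1))) ∧
      (∀ i, i + 1 ≤ l → i % 2 = 0 → M.Adj (f i) (f (i + 1))) ∧
      (∃ i, i ≤ l ∧ closed (f i))) :
    ∃ N : G.Subgraph, N.IsMatching ∧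
      (∀ u, oddV u → ¬ closed u → u ∈ N.verts) ∧ v ∉ N.verts := by
  obtain ⟨l, f, rfl, hinj, hadj, hMadj, k, hkl, hkc⟩ := hpath
  obtain ⟨j, rfl⟩ : Odd k := (G.side_iff_odd_of_path hbip hv hadj k hkl).1 (hco _ hkc)
  obtain ⟨N, hN, hNverts, -⟩ := hM.exists_isMatching_verts_eq_sdiff_ends f j
    (fun a ha b hb => hinj a b (le_trans ha hkl) (le_trans hb hkl))
    (fun i hi => hadj i (by omega)) (fun i hi he => hMadj i (by omega) (Nat.even_iff.1 he))
  refine ⟨N, hN, fun u hu hcu => ?_, by simp [hNverts]⟩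
  rw [hNverts]
  refine ⟨hall u hu hcu, ?_⟩
  rintro (rfl | rfl)
  exacts [hv hu, hcu hkc]

/-- alternating path lemma.  Let `G` be a finite bipartite
graph with vertex classes described by `oddV` (odd) and its complement (even),
where each odd vertex is open or closed (`closed ⊆ oddV`).  Let `M` be a
matching (a matching subgraph, possibly using closed vertices) that matches
all open odd vertices, and let `v` be an even vertex matched in `M`.  If there
is an `M`-alternating path starting from `v` (a self-avoiding path
`f 0, f 1, …, f l` in `G` with `{f i, f (i+1)} ∈ M` for all even `i`) that
contains a closed (odd) vertex, then there is a matching that matches all open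
odd vertices but does not match `v`. -/
theorem exists_matching_avoiding_of_alternating_path [Fintype V]
    (G : SimpleGraph V) (oddV closed : V → Prop)
    (hbip : ∀ u w : V, G.Adj u w → (oddV u ↔ ¬ oddV w))
    (hco : ∀ u, closed u → oddV u)
    (M : G.Subgraph) (hM : M.IsMatching)
    (hall : ∀ u, oddV u → ¬ closed u → u ∈ M.verts)
    (v : V) (hv : ¬ oddV v) (hvM : v ∈ M.verts)
    (hpath : ∃ (l : ℕ) (f : ℕ → V),
      f 0 = v ∧
      (∀ i j, i ≤ l → j ≤ l → f i = f j → i = j) ∧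
      (∀ i, i + 1 ≤ l → G.Adj (f i) (f (i + 1))) ∧
      (∀ i, i + 1 ≤ l → i % 2 = 0 → M.Adj (f i) (f (i + 1))) ∧
      (∃ i, i ≤ l ∧ closed (f i))) :
    ∃ N : G.Subgraph, N.IsMatching ∧
      (∀ u, oddV u → ¬ closed u → u ∈ N.verts) ∧ v ∉ N.verts :=
  exists_matching_avoiding_of_alternating_path_general G oddV closed hbip hco M hM hall v hv hpath
end

section
/- Let n and s be positive integers, and let D_n be the diamond {u ∈ ℤ² : ‖u‖₁ < 2n} with nearest-neighbor edges, with a vertex called odd or even according to the parity of the sum of its coordinates. Let H be a set of odd vertices of D_n. Suppose that every interval of s consecutive odd rows contains at most s vertices of H, and that no two vertices of H lie in the same column within vertical distance less than 2s (in rotated coordinates: for each ⟨i,j⟩ ∈ H there is no other ⟨i,j'⟩ ∈ H with |j−j'| < 2s, where ⟨i,j⟩ := ((i−j)/2, (i+j)/2)). Then there exists a matching of D_n that matches all even vertices but leaves every vertex of H unmatched. -/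
/-!
Write the odd vertex `(p - q, p + q + 1)` and the even vertex `(p - q, p + q)` as `(p, q)`
("half-coordinates"). Then the even vertices of `D_n` form the square `|p|, |q| < n`, and even
`(p, q)` is adjacent to odd `(p, q)`, `(p - 1, q)` and `(p, q - 1)`. Match every even vertex to the
odd vertex with the same half-coordinates, except along one path per hole `k`: it runs down the
column of `k` to a row `v k ∈ (k.2 - s, k.2]` and then left out of the diamond, and the even
vertices on it are matched one step along the path, which frees `k`.

The paths are disjoint if, taking the holes by increasing column, each hole parks at the highest
row `≤ k.2` not yet covered by a segment `[v g, g.2]` of an earlier hole. That row lies above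
`k.2 - s`: otherwise a maximal block of covered rows reaching up from it would, together with `k`,
hold more holes than rows, whereas the windows of `s` consecutive rows hold at most `s` holes each,
and the holes in the bottom partial window park injectively inside it.
-/

/-- The nearest-neighbour grid graph on `ℤ²`. -/
def gridGraph : SimpleGraph (ℤ × ℤ) where
  Adj u v := |u.1 - v.1| + |u.2 - v.2| = 1
  symm := by
    constructor
    intro u v h
    simpa [abs_sub_comm] using h
  loopless := by
    constructor
    intro u h
    simp at h

/-- The diamond `D_n = {u ∈ ℤ² : ‖u‖₁ < 2n}`. -/
def diamond (n : ℕ) : Set (ℤ × ℤ) :=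
  {u | |u.1| + |u.2| < 2 * n}

open Finset

lemma Finset.exists_notMem_Ioc_subset (T : Finset ℤ) (y : ℤ) :
    ∃ ω ≤ y, ω ∉ T ∧ Ioc ω y ⊆ T := by
  obtain ⟨x, hx, hxT⟩ := (Set.Iic_infinite y).exists_notMem_finset T
  obtain ⟨ω, ⟨hωy, hωT⟩, hmax⟩ := Int.exists_greatest_of_bdd (P := fun w => w ≤ y ∧ w ∉ T)
    ⟨y, fun _ h => h.1⟩ ⟨x, hx, hxT⟩
  refine ⟨ω, hωy, hωT, fun w hw => ?_⟩
  rw [mem_Ioc] at hw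
  by_contra hwT
  exact absurd (hmax w ⟨hw.2, hwT⟩) (not_le.2 hw.1)

lemma Finset.exists_Ioc_subset_add_one_notMem {T : Finset ℤ} {ω y : ℤ} (h : Ioc ω y ⊆ T) :
    ∃ z, y ≤ z ∧ Ioc ω z ⊆ T ∧ z + 1 ∉ T := by
  obtain ⟨x, hx, hxT⟩ := (Set.Ioi_infinite y).exists_notMem_finset T
  obtain ⟨w, ⟨hyw, hwT⟩, hmin⟩ := Int.exists_least_of_bdd (P := fun w => y < w ∧ w ∉ T)
    ⟨y, fun _ h => h.1.le⟩ ⟨x, hx, hxT⟩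
  refine ⟨w - 1, by omega, fun x hx => ?_, by simpa using hwT⟩
  rw [mem_Ioc] at hx
  rcases le_or_gt x y with hxy | hyx
  · exact h (mem_Ioc.2 ⟨hx.1, hxy⟩)
  · by_contra hxT
    have := hmin x ⟨hyx, hxT⟩
    omega

lemma card_filter_mem_Ioc_le_mul {α : Type*} [DecidableEq α] (A : Finset α) (f : α → ℤ) (s : ℕ)
    (h : ∀ a : ℤ, #{x ∈ A | f x ∈ Ioc a (a + s)} ≤ s) (b : ℤ) (m : ℕ) :
    #{x ∈ A | f x ∈ Ioc b (b + ↑(m * s))} ≤ m * s := by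
  induction m with
  | zero => simp
  | succ m ih =>
    have hsplit : {x ∈ A | f x ∈ Ioc b (b + ↑((m + 1) * s))} ⊆
        {x ∈ A | f x ∈ Ioc b (b + ↑(m * s))} ∪
          {x ∈ A | f x ∈ Ioc (b + ↑(m * s)) (b + ↑(m * s) + s)} := by
      intro x hx
      simp only [mem_union, mem_filter, mem_Ioc] at hx ⊢
      push_cast [add_one_mul] at hx ⊢
      obtain ⟨hxA, hbx, hxb⟩ := hx
      by_cases hxm : f x ≤ b + m * s
      · exact Or.inl ⟨hxA, hbx, hxm⟩
      · exact Or.inr ⟨hxA, by omega, by omega⟩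
    calc _ ≤ _ := card_le_card hsplit
      _ ≤ _ := card_union_le _ _
      _ ≤ m * s + s := add_le_add ih (h _)
      _ = (m + 1) * s := by ring

structure IsSparse (s : ℕ) (K : Finset (ℤ × ℤ)) : Prop where
  card_window_le : ∀ a : ℤ, #{k ∈ K | k.2 ∈ Ioc a (a + s)} ≤ s
  le_abs_sub : ∀ k ∈ K, ∀ k' ∈ K, k ≠ k' → k.1 = k'.1 → (s : ℤ) ≤ |k.2 - k'.2|

lemma IsSparse.mono {s : ℕ} {K L : Finset (ℤ × ℤ)} (hKL : K ⊆ L) (hL : IsSparse s L) :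
    IsSparse s K where
  card_window_le a := (card_le_card (filter_subset_filter _ hKL)).trans (hL.card_window_le a)
  le_abs_sub k hk k' hk' := hL.le_abs_sub k (hKL hk) k' (hKL hk')

/-- The holes `k ∈ K` (in half-coordinates) have parked at rows `v k`, the path of `k` covering
the rows `Icc (v k) k.2` of its column; `Icc_subset` says that every covered row is a parking
row. -/
structure IsParking (s : ℕ) (K : Finset (ℤ × ℤ)) (v : ℤ × ℤ → ℤ) : Prop where
  sub_lt : ∀ k ∈ K, k.2 - s < v k
  le_snd : ∀ k ∈ K, v k ≤ k.2
  apply_notMem_Icc : ∀ k ∈ K, ∀ k' ∈ K, k.1 < k'.1 → v k' ∉ Icc (v k) k.2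
  Icc_subset : ∀ k ∈ K, Icc (v k) k.2 ⊆ K.image v

namespace IsParking

variable {s : ℕ} {K : Finset (ℤ × ℤ)} {v : ℤ × ℤ → ℤ}

lemma injOn (hv : IsParking s K v) (hK : IsSparse s K) : Set.InjOn v K := by
  intro k hk k' hk' hkk'
  have := hv.sub_lt k hk
  have := hv.sub_lt k' hk'
  have := hv.le_snd k hk
  have := hv.le_snd k' hk'
  by_contra hne
  rcases lt_trichotomy k.1 k'.1 with hlt | heq | hgt
  · exact hv.apply_notMem_Icc k hk k' hk' hlt (mem_Icc.2 ⟨by omega, by omega⟩)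
  · have := hK.le_abs_sub k hk k' hk' hne heq
    rcases abs_cases (k.2 - k'.2) with ⟨_, _⟩ | ⟨_, _⟩ <;> omega
  · exact hv.apply_notMem_Icc k' hk' k hk hgt (mem_Icc.2 ⟨by omega, by omega⟩)

lemma card_filter_snd_le_add_le (hv : IsParking s K v) (hK : IsSparse s K) (ω : ℤ) (r : ℕ) :
    #{k ∈ K | ω < v k ∧ k.2 ≤ ω + r} ≤ r := by
  calc _ ≤ #(Ioc ω (ω + r)) := by
        refine card_le_card_of_injOn v (fun k hk => ?_) ((hv.injOn hK).mono (filter_subset _ _))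
        obtain ⟨hkK, hωv, hkr⟩ := mem_filter.1 hk
        have := hv.le_snd k hkK
        exact mem_Ioc.2 ⟨hωv, by omega⟩
    _ = r := by simp

lemma sub_le_card_filter (hv : IsParking s K v) {ω z : ℤ} (hsub : Ioc ω z ⊆ K.image v)
    (hz : z + 1 ∉ K.image v) : z - ω ≤ #{k ∈ K | ω < v k ∧ k.2 ≤ z} := by
  have hIoc : Ioc ω z ⊆ {k ∈ K | ω < v k ∧ k.2 ≤ z}.image v := fun w hw => by
    obtain ⟨k, hk, rfl⟩ := mem_image.1 (hsub hw)
    rw [mem_Ioc] at hw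
    refine mem_image_of_mem v (mem_filter.2 ⟨hk, hw.1, not_lt.1 fun hzk => hz ?_⟩)
    exact hv.Icc_subset k hk (mem_Icc.2 ⟨by omega, by omega⟩)
  have := (card_le_card hIoc).trans card_image_le
  rw [Int.card_Ioc] at this
  omega

lemma sub_lt_of_Ioc_subset (hs : 0 < s) (hv : IsParking s K v) {u : ℤ × ℤ} (hu : u ∉ K)
    (hK : IsSparse s (insert u K)) {ω : ℤ} (hsub : Ioc ω u.2 ⊆ K.image v) : u.2 - s < ω := by
  by_contra! hω
  obtain ⟨z, huz, hzsub, hz⟩ := exists_Ioc_subset_add_one_notMem hsub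
  set G := {k ∈ K | ω < v k ∧ k.2 ≤ z}
  have hG : z - ω ≤ #G := hv.sub_le_card_filter hzsub hz
  have hcard : #(insert u G) = #G + 1 := card_insert_of_notMem fun h => hu (mem_filter.1 h).1
  -- The `#G + 1 > z - ω` holes of `insert u G` lie in the rows `(ω, z]`: split these rows into
  -- `m` full windows at the top and `r < s` rows at the bottom, which `u` avoids.
  obtain ⟨r, m, hr, hzrm⟩ : ∃ r m : ℕ, r < s ∧ z = ω + r + ↑(m * s) := by
    obtain ⟨L, hL⟩ : ∃ L : ℕ, (L : ℤ) = z - ω := ⟨(z - ω).toNat, by omega⟩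
    refine ⟨L % s, L / s, Nat.mod_lt _ hs, ?_⟩
    have := congrArg (Nat.cast : ℕ → ℤ) (Nat.mod_add_div' L s)
    push_cast at this ⊢
    omega
  have hlow : #{k ∈ insert u G | k.2 ≤ ω + r} ≤ r := by
    rw [filter_insert, if_neg (by omega)]
    refine (card_le_card fun k hk => ?_).trans
      (hv.card_filter_snd_le_add_le (hK.mono (subset_insert _ _)) ω r)
    simp only [G, mem_filter] at hk ⊢
    exact ⟨hk.1.1, hk.1.2.1, hk.2⟩
  have hhigh : #{k ∈ insert u G | ¬k.2 ≤ ω + r} ≤ m * s := by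
    refine (card_le_card fun k hk => ?_).trans
      (card_filter_mem_Ioc_le_mul _ Prod.snd s hK.card_window_le (ω + r) m)
    simp only [G, mem_filter, mem_insert, mem_Ioc] at hk ⊢
    rcases hk with ⟨rfl | ⟨hkK, -, hkz⟩, hkr⟩
    · exact ⟨Or.inl rfl, by omega, by omega⟩
    · exact ⟨Or.inr hkK, by omega, by omega⟩
  have := card_filter_add_card_filter_not (s := insert u G) (fun k => k.2 ≤ ω + r)
  omega

lemma exists_insert (hs : 0 < s) (hv : IsParking s K v) {u : ℤ × ℤ} (hu : u ∉ K)
    (hmax : ∀ k ∈ K, k.1 ≤ u.1) (hK : IsSparse s (insert u K)) :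
    ∃ v', IsParking s (insert u K) v' := by
  obtain ⟨ω, hωu, hωv, hsub⟩ := exists_notMem_Ioc_subset (K.image v) u.2
  have hω := hv.sub_lt_of_Ioc_subset hs hu hK hsub
  set v' := Function.update v u ω
  have hv'K : ∀ k ∈ K, v' k = v k := fun k hk =>
    Function.update_of_ne (ne_of_mem_of_not_mem hk hu) _ _
  have himage : K.image v ⊆ (insert u K).image v' := by
    intro w hw
    obtain ⟨k, hk, rfl⟩ := mem_image.1 hw
    exact mem_image.2 ⟨k, mem_insert_of_mem hk, hv'K k hk⟩
  refine ⟨v', ⟨fun k hk => ?_, fun k hk => ?_, fun k hk k' hk' hlt => ?_, fun k hk => ?_⟩⟩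
  · rcases mem_insert.1 hk with rfl | hkK
    · simpa [v'] using hω
    · rw [hv'K k hkK]
      exact hv.sub_lt k hkK
  · rcases mem_insert.1 hk with rfl | hkK
    · simpa [v'] using hωu
    · rw [hv'K k hkK]
      exact hv.le_snd k hkK
  · rcases mem_insert.1 hk' with rfl | hk'K
    · rcases mem_insert.1 hk with rfl | hkK
      · exact absurd hlt (lt_irrefl _)
      · rw [hv'K k hkK]
        simpa [v'] using fun h => hωv (hv.Icc_subset k hkK h)
    · rcases mem_insert.1 hk with rfl | hkK
      · exact absurd (hmax k' hk'K) (not_le.2 hlt)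
      · rw [hv'K k hkK, hv'K k' hk'K]
        exact hv.apply_notMem_Icc k hkK k' hk'K hlt
  · rcases mem_insert.1 hk with rfl | hkK
    · intro w hw
      rcases (mem_Icc.1 hw).1.eq_or_lt with rfl | hlt
      · exact mem_image.2 ⟨k, mem_insert_self _ _, rfl⟩
      · exact himage (hsub (mem_Ioc.2 ⟨by simpa [v'] using hlt, (mem_Icc.1 hw).2⟩))
    · rw [hv'K k hkK]
      exact (hv.Icc_subset k hkK).trans himage

end IsParking

lemma exists_isParking {s : ℕ} (hs : 0 < s) (K : Finset (ℤ × ℤ)) :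
    IsSparse s K → ∃ v, IsParking s K v := by
  refine K.induction_on_max_value (fun k => k.1) ?_ fun u K hu hmax ih hK => ?_
  · exact fun _ => ⟨Prod.snd, ⟨by simp, by simp, by simp, by simp⟩⟩
  · obtain ⟨v, hv⟩ := ih (hK.mono (subset_insert _ _))
    exact hv.exists_insert hs hu hmax hK

structure IsRouting (K : Finset (ℤ × ℤ)) (v : ℤ × ℤ → ℤ) : Prop where
  le_snd : ∀ k ∈ K, v k ≤ k.2
  apply_notMem_Icc : ∀ k ∈ K, ∀ k' ∈ K, k.1 < k'.1 → v k' ∉ Icc (v k) k.2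
  snd_notMem_Icc : ∀ k ∈ K, ∀ k' ∈ K, k ≠ k' → k.1 = k'.1 → k'.2 ∉ Icc (v k) k.2

lemma IsParking.isRouting {s : ℕ} {K : Finset (ℤ × ℤ)} {v : ℤ × ℤ → ℤ} (hv : IsParking s K v)
    (hK : IsSparse s K) : IsRouting K v where
  le_snd := hv.le_snd
  apply_notMem_Icc := hv.apply_notMem_Icc
  snd_notMem_Icc k hk k' hk' hne heq hk'v := by
    have := hv.sub_lt k hk
    have := hK.le_abs_sub k hk k' hk' hne heq
    rw [mem_Icc] at hk'v
    rcases abs_cases (k.2 - k'.2) with ⟨_, _⟩ | ⟨_, _⟩ <;> omega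

section PathShift

variable (K : Finset (ℤ × ℤ)) (v : ℤ × ℤ → ℤ)

def OnRowPart (x : ℤ × ℤ) : Prop := ∃ k ∈ K, x.2 = v k ∧ x.1 ≤ k.1

def OnColumnPart (x : ℤ × ℤ) : Prop := ∃ k ∈ K, x.1 = k.1 ∧ v k < x.2 ∧ x.2 ≤ k.2

open Classical in
/-- The partner, in half-coordinates, of the even vertex `x`: one step along the path of a hole
if `x` lies on one (left on the row part, down on the column part), the odd vertex `x` otherwise. -/
noncomputable def pathShift (x : ℤ × ℤ) : ℤ × ℤ :=
  if OnRowPart K v x then (x.1 - 1, x.2)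
  else if OnColumnPart K v x then (x.1, x.2 - 1)
  else x

variable {K v} {x y : ℤ × ℤ}

lemma pathShift_of_onRowPart (h : OnRowPart K v x) : pathShift K v x = (x.1 - 1, x.2) := by
  simp [pathShift, h]

lemma pathShift_of_onColumnPart (hr : ¬OnRowPart K v x) (hc : OnColumnPart K v x) :
    pathShift K v x = (x.1, x.2 - 1) := by
  simp [pathShift, hr, hc]

lemma pathShift_of_not (hr : ¬OnRowPart K v x) (hc : ¬OnColumnPart K v x) :
    pathShift K v x = x := by
  simp [pathShift, hr, hc]

lemma pathShift_mem (x : ℤ × ℤ) :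
    pathShift K v x ∈ ({x, (x.1 - 1, x.2), (x.1, x.2 - 1)} : Set (ℤ × ℤ)) := by
  unfold pathShift
  split_ifs <;> simp

lemma IsRouting.pathShift_ne_of_onRowPart (hv : IsRouting K v) (hx : OnRowPart K v x)
    (hy : ¬OnRowPart K v y) : pathShift K v y ≠ (x.1 - 1, x.2) := by
  obtain ⟨k, hk, hxk, hxk'⟩ := hx
  by_cases hc : OnColumnPart K v y
  · obtain ⟨k', hk', hyk', hvy, hyk''⟩ := hc
    rw [pathShift_of_onColumnPart hy ⟨k', hk', hyk', hvy, hyk''⟩, Ne, Prod.ext_iff]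
    rintro ⟨h₁, h₂⟩
    exact hv.apply_notMem_Icc k' hk' k hk (by dsimp only at h₁; omega)
      (mem_Icc.2 (by dsimp only at h₂; omega))
  · rw [pathShift_of_not hy hc]
    rintro rfl
    exact hy ⟨k, hk, hxk, by dsimp only; omega⟩

lemma ne_of_onColumnPart (hx : OnColumnPart K v x) (hy : ¬OnRowPart K v y)
    (hy' : ¬OnColumnPart K v y) : y ≠ (x.1, x.2 - 1) := by
  obtain ⟨k, hk, hxk, hvx, hxk'⟩ := hx
  rintro rfl
  rcases (show v k ≤ x.2 - 1 by omega).eq_or_lt with h | h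
  · exact hy ⟨k, hk, h.symm, hxk.le⟩
  · exact hy' ⟨k, hk, hxk, h, by dsimp only; omega⟩

theorem IsRouting.pathShift_injective (hv : IsRouting K v) :
    Function.Injective (pathShift K v) := by
  intro x y hxy
  by_cases hx : OnRowPart K v x <;> by_cases hy : OnRowPart K v y
  · rw [pathShift_of_onRowPart hx, pathShift_of_onRowPart hy, Prod.ext_iff] at hxy
    exact Prod.ext (by simpa using hxy.1) hxy.2
  · exact absurd (pathShift_of_onRowPart hx ▸ hxy).symm (hv.pathShift_ne_of_onRowPart hx hy)
  · exact absurd (pathShift_of_onRowPart hy ▸ hxy) (hv.pathShift_ne_of_onRowPart hy hx)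
  by_cases hx' : OnColumnPart K v x <;> by_cases hy' : OnColumnPart K v y
  · rw [pathShift_of_onColumnPart hx hx', pathShift_of_onColumnPart hy hy', Prod.ext_iff] at hxy
    exact Prod.ext hxy.1 (by simpa using hxy.2)
  · rw [pathShift_of_onColumnPart hx hx', pathShift_of_not hy hy'] at hxy
    exact absurd hxy.symm (ne_of_onColumnPart hx' hy hy')
  · rw [pathShift_of_not hx hx', pathShift_of_onColumnPart hy hy'] at hxy
    exact absurd hxy (ne_of_onColumnPart hy' hx hx')
  · rwa [pathShift_of_not hx hx', pathShift_of_not hy hy'] at hxy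

theorem IsRouting.pathShift_notMem (hv : IsRouting K v) (x : ℤ × ℤ) : pathShift K v x ∉ K := by
  intro hK
  by_cases hr : OnRowPart K v x
  · obtain ⟨k, hk, hxk, hxk'⟩ := hr
    rw [pathShift_of_onRowPart ⟨k, hk, hxk, hxk'⟩] at hK
    have := hv.le_snd _ hK
    exact hv.apply_notMem_Icc _ hK k hk (by dsimp only; omega)
      (mem_Icc.2 (by dsimp only at this ⊢; omega))
  by_cases hc : OnColumnPart K v x
  · obtain ⟨k, hk, hxk, hvx, hxk'⟩ := hc
    rw [pathShift_of_onColumnPart hr ⟨k, hk, hxk, hvx, hxk'⟩] at hK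
    refine hv.snd_notMem_Icc k hk _ hK (fun h => ?_) hxk.symm
      (mem_Icc.2 ⟨by dsimp only; omega, by dsimp only; omega⟩)
    rw [h] at hxk'
    dsimp only at hxk'
    omega
  · rw [pathShift_of_not hr hc] at hK
    rcases (hv.le_snd x hK).eq_or_lt with h | h
    · exact hr ⟨x, hK, h.symm, le_rfl⟩
    · exact hc ⟨x, hK, rfl, h, le_rfl⟩

end PathShift

lemma mem_diamond_iff {n : ℕ} {u : ℤ × ℤ} :
    u ∈ diamond n ↔ |u.1 + u.2| < 2 * n ∧ |u.2 - u.1| < 2 * n := by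
  change |u.1| + |u.2| < 2 * (n : ℤ) ↔ _
  simp only [abs_lt]
  rcases abs_cases u.1 with ⟨h₁, _⟩ | ⟨h₁, _⟩ <;> rcases abs_cases u.2 with ⟨h₂, _⟩ | ⟨h₂, _⟩ <;>
    rw [h₁, h₂] <;> omega

lemma diamond_finite (n : ℕ) : (diamond n).Finite :=
  (Set.finite_Icc (-(2 * n : ℤ)) (2 * n) |>.prod (Set.finite_Icc (-(2 * n : ℤ)) (2 * n))).subset
    fun u hu => by
      rw [mem_diamond_iff, abs_lt, abs_lt] at hu
      simp only [Set.mem_prod, Set.mem_Icc]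
      omega

def oddVertex (x : ℤ × ℤ) : ℤ × ℤ := (x.1 - x.2, x.1 + x.2 + 1)

/-- Inverse of `oddVertex`; it also sends the even vertex `(p - q, p + q)` to `(p, q)`, as `/ 2`
rounds down. -/
def halfCoords (u : ℤ × ℤ) : ℤ × ℤ := ((u.1 + u.2) / 2, (u.2 - u.1) / 2)

lemma halfCoords_oddVertex (x : ℤ × ℤ) : halfCoords (oddVertex x) = x := by
  simp only [halfCoords, oddVertex]
  ext <;> dsimp only <;> omega

lemma halfCoords_injOn_even : Set.InjOn halfCoords {u | Even (u.1 + u.2)} := by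
  rintro u ⟨k, hk⟩ u' ⟨k', hk'⟩ h
  simp only [halfCoords, Prod.ext_iff] at h
  ext <;> omega

lemma not_even_oddVertex (x : ℤ × ℤ) : ¬Even ((oddVertex x).1 + (oddVertex x).2) := by
  simp only [oddVertex, Int.not_even_iff_odd]
  exact ⟨x.1, by ring⟩

lemma gridGraph_adj_oddVertex {u y : ℤ × ℤ} (hu : Even (u.1 + u.2))
    (hy : y ∈ ({halfCoords u, ((halfCoords u).1 - 1, (halfCoords u).2),
      ((halfCoords u).1, (halfCoords u).2 - 1)} : Set (ℤ × ℤ))) :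
    gridGraph.Adj u (oddVertex y) := by
  obtain ⟨k, hk⟩ := hu
  simp only [Set.mem_insert_iff, Set.mem_singleton_iff] at hy
  have : oddVertex y = (u.1, u.2 + 1) ∨ oddVertex y = (u.1 - 1, u.2) ∨
      oddVertex y = (u.1 + 1, u.2) := by
    rcases hy with rfl | rfl | rfl <;> simp only [halfCoords, oddVertex, Prod.ext_iff] <;> omega
  rcases this with h | h | h <;> rw [h] <;> simp [gridGraph]

lemma oddVertex_mem_diamond {n : ℕ} {u y : ℤ × ℤ} (hu : u ∈ diamond n) (he : Even (u.1 + u.2))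
    (hy : y ∈ ({halfCoords u, ((halfCoords u).1 - 1, (halfCoords u).2),
      ((halfCoords u).1, (halfCoords u).2 - 1)} : Set (ℤ × ℤ))) :
    oddVertex y ∈ diamond n := by
  obtain ⟨k, hk⟩ := he
  rw [mem_diamond_iff, abs_lt, abs_lt] at hu ⊢
  simp only [Set.mem_insert_iff, Set.mem_singleton_iff] at hy
  rcases hy with rfl | rfl | rfl <;> simp only [halfCoords, oddVertex] <;> omega

lemma isSparse_image_halfCoords {s : ℕ} {H : Set (ℤ × ℤ)} (hH : H.Finite)
    (hodd : ∀ u ∈ H, Odd (u.1 + u.2))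
    (hrows : ∀ a : ℤ,
      (H ∩ {u | ∃ j : ℤ, 1 ≤ j ∧ j ≤ (s : ℤ) ∧ u.2 - u.1 = 2 * j + 2 * a + 1}).ncard ≤ s)
    (hcol : ∀ u ∈ H, ∀ v ∈ H, u ≠ v → u.1 + u.2 = v.1 + v.2 →
      2 * (s : ℤ) ≤ |(u.2 - u.1) - (v.2 - v.1)|) :
    IsSparse s (hH.toFinset.image halfCoords) where
  card_window_le a := by
    rw [filter_image]
    refine card_image_le.trans ?_
    rw [← Set.ncard_coe_finset]
    refine (Set.ncard_le_ncard (fun u hu => ?_) (hH.inter_of_left _)).trans (hrows a)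
    obtain ⟨huH, hua⟩ := mem_filter.1 hu
    rw [Set.Finite.mem_toFinset] at huH
    obtain ⟨k, hk⟩ := hodd u huH
    simp only [halfCoords, mem_Ioc] at hua
    exact ⟨huH, (u.2 - u.1 - 1) / 2 - a, by omega, by omega, by omega⟩
  le_abs_sub := by
    simp only [mem_image, Set.Finite.mem_toFinset]
    rintro _ ⟨u, hu, rfl⟩ _ ⟨u', hu', rfl⟩ hne heq
    obtain ⟨k, hk⟩ := hodd u hu
    obtain ⟨k', hk'⟩ := hodd u' hu'
    simp only [halfCoords] at heq ⊢
    have := hcol u hu u' hu' (fun h => hne (h ▸ rfl)) (by omega)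
    rw [show u.2 - u.1 - (u'.2 - u'.1) = 2 * ((u.2 - u.1) / 2 - (u'.2 - u'.1) / 2) by omega,
      abs_mul] at this
    norm_num at this
    exact this

theorem diamond_matching_all_even_avoiding_general
    (n s : ℕ) (hs : 0 < s)
    (H : Set (ℤ × ℤ)) (hHd : H ⊆ diamond n)
    (hHodd : ∀ u ∈ H, Odd (u.1 + u.2))
    (hrows : ∀ a : ℤ,
      (H ∩ {u | ∃ j : ℤ, 1 ≤ j ∧ j ≤ (s : ℤ) ∧ u.2 - u.1 = 2 * j + 2 * a + 1}).ncard ≤ s)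
    (hcol : ∀ u ∈ H, ∀ v ∈ H, u ≠ v → u.1 + u.2 = v.1 + v.2 →
      2 * (s : ℤ) ≤ |(u.2 - u.1) - (v.2 - v.1)|) :
    ∃ M : gridGraph.Subgraph, M.verts ⊆ diamond n ∧ M.IsMatching ∧
      (∀ u ∈ diamond n, Even (u.1 + u.2) → u ∈ M.verts) ∧
      (∀ u ∈ H, u ∉ M.verts) := by
  have hH : H.Finite := (diamond_finite n).subset hHd
  set K := hH.toFinset.image halfCoords
  have hK := isSparse_image_halfCoords hH hHodd hrows hcol
  obtain ⟨v, hv⟩ := exists_isParking hs K hK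
  have hroute := hv.isRouting hK
  set S := {u ∈ diamond n | Even (u.1 + u.2)}
  set g := fun u => oddVertex (pathShift K v (halfCoords u))
  have hinj : S.InjOn g := fun u hu u' hu' h => halfCoords_injOn_even hu.2 hu'.2
    (hroute.pathShift_injective ((Function.LeftInverse.injective halfCoords_oddVertex) h))
  have hdisj : Disjoint S (g '' S) := Set.disjoint_left.2 fun u hu ⟨u', _, hu'⟩ =>
    not_even_oddVertex _ (hu' ▸ hu.2)
  obtain ⟨M, hMverts, hM⟩ :=
    SimpleGraph.Subgraph.IsMatching.exists_of_disjoint_sets_of_equiv hdisj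
      (hinj.bijOn_image.equiv g) fun u => gridGraph_adj_oddVertex u.2.2 (pathShift_mem _)
  refine ⟨M, ?_, hM, fun u hu he => hMverts ▸ Or.inl ⟨hu, he⟩, fun w hw => ?_⟩
  · rw [hMverts]
    rintro _ (hu | ⟨u, hu, rfl⟩)
    · exact hu.1
    · exact oddVertex_mem_diamond hu.1 hu.2 (pathShift_mem _)
  · rw [hMverts]
    rintro (hS | ⟨u, -, hu⟩)
    · exact Int.not_even_iff_odd.2 (hHodd w hw) hS.2
    · refine hroute.pathShift_notMem (halfCoords u) ?_
      rw [← halfCoords_oddVertex (pathShift K v _)]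
      exact mem_image_of_mem _ (hH.mem_toFinset.2 (hu.symm ▸ hw : g u ∈ H))

/-- Let `H` be a set of odd vertices of the diamond `D_n`.
In the rotated coordinates `⟨i,j⟩ = ((i-j)/2, (i+j)/2)` (so a vertex `u` lies
in column `i = u.1 + u.2` and row `j = u.2 - u.1`), suppose that every
interval of `s` consecutive odd rows `⋃_{j=1}^{s} R_{2j+2a+1}` contains at
most `s` vertices of `H`, and that no two distinct vertices of `H` lie in the
same column with their row indices differing by less than `2s`.  Then there is
a matching of `D_n` matching all even vertices but leaving `H` unmatched. -/
theorem diamond_matching_all_even_avoiding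
    (n s : ℕ) (hn : 0 < n) (hs : 0 < s)
    (H : Set (ℤ × ℤ)) (hHd : H ⊆ diamond n)
    (hHodd : ∀ u ∈ H, Odd (u.1 + u.2))
    (hrows : ∀ a : ℤ,
      (H ∩ {u | ∃ j : ℤ, 1 ≤ j ∧ j ≤ (s : ℤ) ∧ u.2 - u.1 = 2 * j + 2 * a + 1}).ncard ≤ s)
    (hcol : ∀ u ∈ H, ∀ v ∈ H, u ≠ v → u.1 + u.2 = v.1 + v.2 →
      2 * (s : ℤ) ≤ |(u.2 - u.1) - (v.2 - v.1)|) :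
    ∃ M : gridGraph.Subgraph, M.verts ⊆ diamond n ∧ M.IsMatching ∧
      (∀ u ∈ diamond n, Even (u.1 + u.2) → u ∈ M.verts) ∧
      (∀ u ∈ H, u ∉ M.verts) :=
  diamond_matching_all_even_avoiding_general n s hs H hHd hHodd hrows hcol
end

section
/- Consider the Fröbose bootstrap percolation dynamics on the odd sublattice 𝔹ᵈ_o of the body-centered hypercubic lattice 𝔹ᵈ, started with the closed odd vertices occupied, and suppose the box B̃(u,n) is good, meaning: (i) all even vertices of B̃(u,n) are open, and (ii) its odd part B̃_o(u,n) is internally spanned. Then for every odd vertex v in B̃(u,n) that becomes occupied at some finite time t, Eve (the player who moves to even vertices) has a winning strategy in Trap started from v that keeps the token in B̃(u,n) and uses at most t moves of Eve. The strategy is: when the token is at an odd vertex w with occupation time T(w) = t ≥ 1, Eve moves to an even neighbor x of w such that all neighbors of x other than w are occupied at time t−1. -/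
/-!
Let `T` be the occupation time of the dynamics restricted to the box, where a new occupation
must be certified by an even vertex of `B̃_e(u,n)`. From an odd vertex `w`, Eve moves to such a
certificate `x` of `w`: all neighbours of `x` other than `w` were occupied at time `T(w) - 1`,
so every reply of Odin goes to a box vertex of smaller time. The vertex `x` is unvisited,
because every even vertex visited earlier is adjacent to a vertex of time larger than `T(w)`.
Hence Odin is stuck after at most `T(v)` rounds.

It remains to see that `T(v) ≤ t`, i.e. that restricting the dynamics to the box does not slow
it down there. Folding `ℤᵈ` onto the box by a triangle wave in every coordinate fixes the box,
preserves the adjacency of `𝔹ᵈ` around even vertices and so maps the free dynamics into the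
restricted one.
-/

/-- Vertices of the ambient lattice `ℤᵈ`. -/
abbrev BV (d : ℕ) := Fin d → ℤ

/-- An odd vertex of the body-centered lattice: all coordinates odd. -/
def isOddV {d : ℕ} (v : BV d) : Prop := ∀ k, Odd (v k)

/-- An even vertex of the body-centered lattice: all coordinates even. -/
def isEvenV {d : ℕ} (v : BV d) : Prop := ∀ k, Even (v k)

/-- The body-centered hypercubic lattice `𝔹ᵈ`: vertices with all coordinates
even or all odd, adjacent when at `ℓ∞`-distance `1` (equivalently, for a pair
of opposite parities, when all coordinates differ by exactly `1`). -/
def bccGraph (d : ℕ) : SimpleGraph (BV d) where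
  Adj u v := u ≠ v ∧
    ((isOddV u ∧ isEvenV v) ∨ (isEvenV u ∧ isOddV v)) ∧ ∀ k, |u k - v k| = 1
  symm := by
    constructor
    rintro u v ⟨hne, hp, hd⟩
    refine ⟨hne.symm, ?_, fun k => by rw [abs_sub_comm]; exact hd k⟩
    rcases hp with ⟨h1, h2⟩ | ⟨h1, h2⟩
    · exact Or.inr ⟨h2, h1⟩
    · exact Or.inl ⟨h2, h1⟩
  loopless := by
    constructor
    rintro u ⟨hne, -, -⟩
    exact hne rfl

variable {V : Type*}

/-- One step of the Fröbose bootstrap dynamics on the odd sublattice `𝔹ᵈ_o`: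
an odd vertex `v` becomes occupied if some even neighbour `w` of `v` has all
its neighbours other than `v` already occupied (this is the hypercube rule
transported to `𝔹ᵈ_o ≅ ℤᵈ`). -/
def frobStep (d : ℕ) (A : Set (BV d)) : Set (BV d) :=
  A ∪ {v | isOddV v ∧ ∃ w, (bccGraph d).Adj w v ∧
    ∀ x, (bccGraph d).Adj w x → x ≠ v → x ∈ A}

/-- The odd part `B̃_o(u,n) = u + 2([1,n]ᵈ ∩ ℤᵈ)` of the box. -/
def boxO (d : ℕ) (u : BV d) (n : ℕ) : Set (BV d) :=
  {v | ∀ k, ∃ m : ℤ, 1 ≤ m ∧ m ≤ (n : ℤ) ∧ v k = u k + 2 * m}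

/-- The even part `B̃_e(u,n)`: even vertices all of whose neighbours lie in
`B̃_o(u,n)`. -/
def boxE (d : ℕ) (u : BV d) (n : ℕ) : Set (BV d) :=
  {w | isEvenV w ∧ ∀ x, (bccGraph d).Adj w x → x ∈ boxO d u n}

/-- The box `B̃(u,n) = B̃_o(u,n) ∪ B̃_e(u,n)`. -/
def boxB (d : ℕ) (u : BV d) (n : ℕ) : Set (BV d) :=
  boxO d u n ∪ boxE d u n

/-- Folds `ℤ` onto `[a, a + L]` by reflections in the endpoints: the triangle wave of period
`2 L`. -/
def triangleWave (a L z : ℤ) : ℤ := a + L - |(z - a) % (2 * L) - L|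

section TriangleWave

variable {a L : ℤ}

lemma triangleWave_add_mul_add (q : ℤ) {r : ℤ} (hr₀ : 0 ≤ r) (hr : r < 2 * L) :
    triangleWave a L (a + 2 * L * q + r) = a + L - |r - L| := by
  rw [triangleWave, show a + 2 * L * q + r - a = r + 2 * L * q by ring,
    Int.add_mul_emod_self_left, Int.emod_eq_of_lt hr₀ hr]

lemma exists_eq_add_mul_add (a : ℤ) (hL : 0 < L) (z : ℤ) :
    ∃ q r, 0 ≤ r ∧ r < 2 * L ∧ z = a + 2 * L * q + r :=
  ⟨(z - a) / (2 * L), (z - a) % (2 * L), Int.emod_nonneg _ (by omega),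
    Int.emod_lt_of_pos _ (by omega), by linarith [Int.emod_add_mul_ediv (z - a) (2 * L)]⟩

lemma triangleWave_eq_self (hL : 0 < L) {z : ℤ} (h₀ : a ≤ z) (h₁ : z ≤ a + L) :
    triangleWave a L z = z := by
  have h := triangleWave_add_mul_add (a := a) (L := L) 0 (r := z - a) (by omega) (by omega)
  rw [mul_zero, add_zero, add_sub_cancel] at h
  grind

lemma triangleWave_mem_Icc (hL : 0 < L) (z : ℤ) :
    a ≤ triangleWave a L z ∧ triangleWave a L z ≤ a + L := by
  obtain ⟨q, r, hr₀, hr, rfl⟩ := exists_eq_add_mul_add a hL z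
  rw [triangleWave_add_mul_add q hr₀ hr]
  grind

lemma even_triangleWave_sub (hL : 0 < L) (z : ℤ) : Even (triangleWave a L z - z) := by
  obtain ⟨q, r, hr₀, hr, rfl⟩ := exists_eq_add_mul_add a hL z
  rw [triangleWave_add_mul_add q hr₀ hr]
  rcases abs_cases (r - L) with ⟨h, -⟩ | ⟨h, -⟩ <;> rw [h]
  · exact ⟨L - r - L * q, by ring⟩
  · exact ⟨-(L * q), by ring⟩

/-- Away from the fold points `a + L ℤ`, the triangle wave is locally a translation or a
reflection. -/
lemma triangleWave_add_one_and_sub_one (hL : 0 < L) (hLe : Even L) {z : ℤ} (hz : Odd (z - a)) :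
    (triangleWave a L (z + 1) = triangleWave a L z + 1 ∧
        triangleWave a L (z - 1) = triangleWave a L z - 1) ∨
      (triangleWave a L (z + 1) = triangleWave a L z - 1 ∧
        triangleWave a L (z - 1) = triangleWave a L z + 1) := by
  obtain ⟨q, r, hr₀, hr, rfl⟩ := exists_eq_add_mul_add a hL z
  obtain ⟨l, hl⟩ := hLe
  obtain ⟨j, hj⟩ := hz
  have hrj : r = 2 * (j - L * q) + 1 := by linarith
  have h₀ := triangleWave_add_mul_add (a := a) q hr₀ hr
  have h_sub : triangleWave a L (a + 2 * L * q + r - 1) = a + L - |r - 1 - L| := by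
    rw [add_sub_assoc]
    exact triangleWave_add_mul_add q (by omega) (by omega)
  rw [h₀, h_sub]
  rcases lt_or_eq_of_le (show r + 1 ≤ 2 * L by omega) with h | h
  · rw [add_assoc, triangleWave_add_mul_add q (by omega) h]
    grind
  · rw [show a + 2 * L * q + r + 1 = a + 2 * L * (q + 1) + 0 by linear_combination h,
      triangleWave_add_mul_add (q + 1) le_rfl (by omega)]
    grind

end TriangleWave

section BodyCentered

variable {d : ℕ}

lemma not_isEvenV_of_isOddV (hd : 0 < d) {x : BV d} (hx : isOddV x) : ¬ isEvenV x :=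
  fun he => Int.not_even_iff_odd.mpr (hx ⟨0, hd⟩) (he ⟨0, hd⟩)

lemma isEvenV_of_adj_of_isOddV (hd : 0 < d) {x y : BV d} (h : (bccGraph d).Adj x y)
    (hx : isOddV x) : isEvenV y := by
  rcases h.2.1 with ⟨-, hy⟩ | ⟨hx', -⟩
  · exact hy
  · exact absurd hx' (not_isEvenV_of_isOddV hd hx)

lemma isOddV_of_adj_of_isEvenV (hd : 0 < d) {x y : BV d} (h : (bccGraph d).Adj x y)
    (hx : isEvenV x) : isOddV y := by
  rcases h.2.1 with ⟨hx', -⟩ | ⟨-, hy⟩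
  · exact absurd hx (not_isEvenV_of_isOddV hd hx')
  · exact hy

lemma bccGraph_adj_of_isEvenV (hd : 0 < d) {x y : BV d} (hx : isEvenV x) (hy : isOddV y)
    (h : ∀ k, |x k - y k| = 1) : (bccGraph d).Adj x y :=
  ⟨fun hxy => not_isEvenV_of_isOddV hd hy (hxy ▸ hx), Or.inr ⟨hx, hy⟩, h⟩

/-- The point reflection `2 x - v` of a neighbour `v` of `x` is another neighbour of `x`. -/
lemma exists_adj_ne (hd : 0 < d) {x v : BV d} (hx : isEvenV x) (h : (bccGraph d).Adj x v) :
    ∃ y, (bccGraph d).Adj x y ∧ y ≠ v := by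
  have hv := isOddV_of_adj_of_isEvenV hd h hx
  refine ⟨fun k => 2 * x k - v k, bccGraph_adj_of_isEvenV hd hx
    (fun k => (even_two_mul (x k)).sub_odd (hv k)) (fun k => ?_), fun he => ?_⟩
  · have := h.2.2 k
    grind
  · have h0 := h.2.2 ⟨0, hd⟩
    have := congrFun he ⟨0, hd⟩
    grind

end BodyCentered

section Box

variable {d : ℕ} {u : BV d} {n : ℕ}

lemma isOddV_of_mem_boxO (hu : isOddV u) {v : BV d} (hv : v ∈ boxO d u n) : isOddV v := by
  intro k
  obtain ⟨m, -, -, hm⟩ := hv k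
  rw [hm]
  exact (hu k).add_even (even_two_mul m)

lemma mem_boxO_of_bounds (hu : isOddV u) {v : BV d} (hv : isOddV v)
    (h : ∀ k, u k + 2 ≤ v k ∧ v k ≤ u k + 2 * n) : v ∈ boxO d u n := by
  intro k
  obtain ⟨i, hi⟩ := hu k
  obtain ⟨j, hj⟩ := hv k
  have := h k
  exact ⟨j - i, by omega, by omega, by omega⟩

lemma boxO_subsingleton (hn : n ≤ 1) : (boxO d u n).Subsingleton := by
  intro v hv w hw
  funext k
  obtain ⟨m, _, _, hm⟩ := hv k
  obtain ⟨m', _, _, hm'⟩ := hw k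
  omega

end Box

section Fold

variable {d : ℕ} {u : BV d} {n : ℕ}

def boxFold (u : BV d) (n : ℕ) (z : BV d) : BV d :=
  fun k => triangleWave (u k + 2) (2 * n - 2) (z k)

lemma boxFold_of_mem (hn : 2 ≤ n) {v : BV d} (hv : v ∈ boxO d u n) : boxFold u n v = v := by
  funext k
  obtain ⟨m, hm₁, hm₂, hm⟩ := hv k
  exact triangleWave_eq_self (by omega) (by omega) (by omega)

lemma boxFold_mem_Icc (hn : 2 ≤ n) (z : BV d) (k : Fin d) :
    u k + 2 ≤ boxFold u n z k ∧ boxFold u n z k ≤ u k + 2 * n := by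
  have := triangleWave_mem_Icc (a := u k + 2) (L := 2 * n - 2) (by omega) (z k)
  simp only [boxFold]
  omega

lemma isOddV_boxFold (hn : 2 ≤ n) {v : BV d} (hv : isOddV v) : isOddV (boxFold u n v) := by
  intro k
  simpa [boxFold] using (even_triangleWave_sub (a := u k + 2) (L := 2 * n - 2) (by omega) (v k)).add_odd (hv k)

lemma isEvenV_boxFold (hn : 2 ≤ n) {x : BV d} (hx : isEvenV x) : isEvenV (boxFold u n x) := by
  intro k
  simpa [boxFold] using (even_triangleWave_sub (a := u k + 2) (L := 2 * n - 2) (by omega) (x k)).add (hx k)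

lemma boxFold_mem_boxO (hu : isOddV u) (hn : 2 ≤ n) {v : BV d} (hv : isOddV v) :
    boxFold u n v ∈ boxO d u n :=
  mem_boxO_of_bounds hu (isOddV_boxFold hn hv) (boxFold_mem_Icc hn v)

lemma boxFold_mem_boxE (hd : 0 < d) (hu : isOddV u) (hn : 2 ≤ n) {x : BV d} (hx : isEvenV x) :
    boxFold u n x ∈ boxE d u n := by
  have hfx := isEvenV_boxFold (u := u) hn hx
  refine ⟨hfx, fun y hy => mem_boxO_of_bounds hu (isOddV_of_adj_of_isEvenV hd hy hfx) fun k => ?_⟩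
  have := boxFold_mem_Icc (u := u) hn x k
  have := hy.2.2 k
  obtain ⟨i, hi⟩ := hu k
  obtain ⟨j, hj⟩ := hfx k
  grind

lemma triangleWave_add_one_and_sub_one_of_isEvenV (hu : isOddV u) (hn : 2 ≤ n) {x : BV d}
    (hx : isEvenV x) (k : Fin d) :
    (triangleWave (u k + 2) (2 * n - 2) (x k + 1) = boxFold u n x k + 1 ∧
        triangleWave (u k + 2) (2 * n - 2) (x k - 1) = boxFold u n x k - 1) ∨
      (triangleWave (u k + 2) (2 * n - 2) (x k + 1) = boxFold u n x k - 1 ∧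
        triangleWave (u k + 2) (2 * n - 2) (x k - 1) = boxFold u n x k + 1) :=
  triangleWave_add_one_and_sub_one (by omega) ⟨n - 1, by ring⟩
    ((hx k).sub_odd ((hu k).add_even even_two))

lemma boxFold_adj (hd : 0 < d) (hu : isOddV u) (hn : 2 ≤ n) {x v : BV d} (hx : isEvenV x)
    (h : (bccGraph d).Adj x v) : (bccGraph d).Adj (boxFold u n x) (boxFold u n v) := by
  refine bccGraph_adj_of_isEvenV hd (isEvenV_boxFold hn hx)
    (isOddV_boxFold hn (isOddV_of_adj_of_isEvenV hd h hx)) fun k => ?_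
  have := h.2.2 k
  have := triangleWave_add_one_and_sub_one_of_isEvenV hu hn hx k
  obtain hv | hv : v k = x k + 1 ∨ v k = x k - 1 := by grind
  all_goals simp only [boxFold] at *; rw [hv]; grind

lemma exists_adj_boxFold_eq (hd : 0 < d) (hu : isOddV u) (hn : 2 ≤ n) {x y' : BV d}
    (hx : isEvenV x) (hy' : (bccGraph d).Adj (boxFold u n x) y') :
    ∃ y, (bccGraph d).Adj x y ∧ boxFold u n y = y' := by
  set y : BV d := fun k =>
    if triangleWave (u k + 2) (2 * n - 2) (x k + 1) = y' k then x k + 1 else x k - 1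
  have hy : ∀ k, (y k = x k + 1 ∨ y k = x k - 1) ∧
      triangleWave (u k + 2) (2 * n - 2) (y k) = y' k := by
    intro k
    have := hy'.2.2 k
    have := triangleWave_add_one_and_sub_one_of_isEvenV hu hn hx k
    simp only [y]
    split_ifs <;> grind
  refine ⟨y, bccGraph_adj_of_isEvenV hd hx (fun k => ?_) (fun k => ?_), funext fun k => (hy k).2⟩
  · rcases (hy k).1 with h | h <;> rw [h]
    exacts [(hx k).add_one, (hx k).sub_odd odd_one]
  · rcases (hy k).1 with h | h <;> rw [h] <;> norm_num

end Fold

section BoxDynamics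

variable {d : ℕ} {u : BV d} {n : ℕ} {S : Set (BV d)}

def boxStep (d : ℕ) (u : BV d) (n : ℕ) (A : Set (BV d)) : Set (BV d) :=
  A ∪ {v | ∃ x ∈ boxE d u n, (bccGraph d).Adj x v ∧
    ∀ y, (bccGraph d).Adj x y → y ≠ v → y ∈ A}

lemma monotone_boxStep_iterate (S : Set (BV d)) :
    Monotone fun r => (boxStep d u n)^[r] S :=
  fun _ _ h => Function.monotone_iterate_of_id_le (fun _ => Set.subset_union_left) h S

lemma boxStep_iterate_subset_boxO (hS : S ⊆ boxO d u n) :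
    ∀ r, (boxStep d u n)^[r] S ⊆ boxO d u n
  | 0 => hS
  | r + 1 => by
    rw [Function.iterate_succ_apply']
    rintro v (hv | ⟨x, hx, hxv, -⟩)
    · exact boxStep_iterate_subset_boxO hS r hv
    · exact hx.2 v hxv

lemma boxFold_mem_boxStep_iterate (hd : 0 < d) (hu : isOddV u) (hn : 2 ≤ n)
    (hS : S ⊆ boxO d u n) :
    ∀ r, ∀ w ∈ (frobStep d)^[r] S, boxFold u n w ∈ (boxStep d u n)^[r] S
  | 0, w, hw => by rwa [Function.iterate_zero_apply, boxFold_of_mem hn (hS hw)]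
  | r + 1, w, hw => by
    rw [Function.iterate_succ_apply'] at hw ⊢
    rcases hw with hw | ⟨hw, x, hxw, hx⟩
    · exact Or.inl (boxFold_mem_boxStep_iterate hd hu hn hS r w hw)
    · have hxe := isEvenV_of_adj_of_isOddV hd hxw.symm hw
      refine Or.inr ⟨boxFold u n x, boxFold_mem_boxE hd hu hn hxe, boxFold_adj hd hu hn hxe hxw,
        fun y' hy' hne => ?_⟩
      obtain ⟨y, hy, rfl⟩ := exists_adj_boxFold_eq hd hu hn hxe hy'
      exact boxFold_mem_boxStep_iterate hd hu hn hS r y (hx y hy (by rintro rfl; exact hne rfl))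

/-- Every occupied vertex traces back to an initially occupied one, which for `n ≤ 1` is the
only odd vertex of the box. -/
lemma mem_boxStep_iterate_of_subsingleton (hd : 0 < d) (hsub : (boxO d u n).Subsingleton)
    (hS : S ⊆ boxO d u n) :
    ∀ r, ∀ w ∈ (frobStep d)^[r] S, ∀ p ∈ boxO d u n, p ∈ (boxStep d u n)^[r] S
  | 0, w, hw, p, hp => hsub (hS hw) hp ▸ hw
  | r + 1, w, hw, p, hp => by
    rw [Function.iterate_succ_apply'] at hw
    apply monotone_boxStep_iterate S r.le_succ
    rcases hw with hw | ⟨hw, x, hxw, hx⟩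
    · exact mem_boxStep_iterate_of_subsingleton hd hsub hS r w hw p hp
    · obtain ⟨y, hy, hne⟩ := exists_adj_ne hd (isEvenV_of_adj_of_isOddV hd hxw.symm hw) hxw
      exact mem_boxStep_iterate_of_subsingleton hd hsub hS r y (hx y hy hne) p hp

lemma mem_boxStep_iterate_of_mem_frobStep_iterate (hd : 0 < d) (hu : isOddV u)
    (hS : S ⊆ boxO d u n) {r : ℕ} {v : BV d} (hv : v ∈ boxO d u n)
    (hvr : v ∈ (frobStep d)^[r] S) : v ∈ (boxStep d u n)^[r] S := by
  rcases le_or_gt n 1 with hn | hn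
  · exact mem_boxStep_iterate_of_subsingleton hd (boxO_subsingleton hn) hS r v hvr v hv
  · simpa only [boxFold_of_mem hn hv] using boxFold_mem_boxStep_iterate hd hu hn hS r v hvr

/-- `0` for vertices that are never occupied. -/
noncomputable def boxTime (d : ℕ) (u : BV d) (n : ℕ) (S : Set (BV d)) (w : BV d) : ℕ :=
  sInf {r | w ∈ (boxStep d u n)^[r] S}

lemma boxTime_le {w : BV d} {r : ℕ} (h : w ∈ (boxStep d u n)^[r] S) : boxTime d u n S w ≤ r :=
  Nat.sInf_le h

def IsBoxCertificate (d : ℕ) (u : BV d) (n : ℕ) (S : Set (BV d)) (w x : BV d) : Prop :=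
  x ∈ boxE d u n ∧ (bccGraph d).Adj x w ∧
    ∀ y, (bccGraph d).Adj x y → y ≠ w → y ∈ (boxStep d u n)^[boxTime d u n S w - 1] S

lemma exists_isBoxCertificate {w : BV d} {r : ℕ} (h : w ∈ (boxStep d u n)^[r] S) (hw : w ∉ S) :
    0 < boxTime d u n S w ∧ ∃ x, IsBoxCertificate d u n S w x := by
  have hT : w ∈ (boxStep d u n)^[boxTime d u n S w] S :=
    Nat.sInf_mem (s := {r | w ∈ (boxStep d u n)^[r] S}) ⟨r, h⟩
  obtain ⟨k, hk⟩ : ∃ k, boxTime d u n S w = k + 1 :=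
    Nat.exists_eq_succ_of_ne_zero fun h0 => hw (by rwa [h0] at hT)
  rw [hk, Function.iterate_succ_apply'] at hT
  rcases hT with hT | ⟨x, hx⟩
  · exact absurd (boxTime_le hT) (by omega)
  · exact ⟨by omega, x, by rwa [IsBoxCertificate, hk, Nat.add_sub_cancel]⟩

end BoxDynamics

section Trap

/-- Eve's strategy in Trap, abstracted: `P` contains the positions from which Eve moves, ranked
by `T`, and `μ w` is her move from `w`. -/
structure RankedResponse (G : SimpleGraph V) (A B P : Set V) (T : V → ℕ) (μ : V → V) : Prop where
  subset_allowed : P ⊆ A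
  subset_region : P ⊆ B
  rank_pos : ∀ w ∈ P, 0 < T w
  adj : ∀ w ∈ P, G.Adj w (μ w)
  response_allowed : ∀ w ∈ P, μ w ∈ A
  response_region : ∀ w ∈ P, μ w ∈ B
  response_not_mem : ∀ w ∈ P, μ w ∉ P
  rank_lt : ∀ w ∈ P, ∀ y, G.Adj (μ w) y → y ≠ w → y ∈ A → y ∈ P ∧ T y < T w

/-- The invariant of a play following `μ` when Eve is to move from `w`. -/
structure EveToMove (G : SimpleGraph V) (B P : Set V) (T : V → ℕ) (h : List V) (w : V) :
    Prop where
  head : h.head? = some w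
  mem : w ∈ P
  odd_length : h.length % 2 = 1
  subset : ∀ x ∈ h, x ∈ B
  visited : ∀ x ∈ h, x ∉ P → ∃ w' ∈ P, G.Adj x w' ∧ T w < T w'

variable {G : SimpleGraph V} {A B P : Set V} {T : V → ℕ} {μ : V → V} {h : List V} {w : V}

lemma trapPlay_succ_of_odd_s7 {σ τ : List V → V} {v : V} {m : ℕ}
    (hlen : (trapPlay G A σ τ v m).length % 2 = 1)
    (hleg : TrapLegal G A (trapPlay G A σ τ v m) (σ (trapPlay G A σ τ v m))) :
    trapPlay G A σ τ v (m + 1) = σ (trapPlay G A σ τ v m) :: trapPlay G A σ τ v m := by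
  simp only [trapPlay]
  rw [if_pos hlen, if_pos hleg]

lemma trapPlay_succ_of_even_s7 {σ τ : List V → V} {v : V} {m : ℕ}
    (hlen : (trapPlay G A σ τ v m).length % 2 = 0)
    (hleg : TrapLegal G A (trapPlay G A σ τ v m) (τ (trapPlay G A σ τ v m))) :
    trapPlay G A σ τ v (m + 1) = τ (trapPlay G A σ τ v m) :: trapPlay G A σ τ v m := by
  simp only [trapPlay]
  rw [if_neg (show ¬ (trapPlay G A σ τ v m).length % 2 = 1 by omega), if_pos hleg]

namespace RankedResponse

variable (hμ : RankedResponse G A B P T μ)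
include hμ

/-- Eve's move is to an unvisited vertex: a visited vertex outside `P` is adjacent to a vertex
of `P` of rank larger than `T w`, which the ranked response forbids. -/
lemma trapLegal (hh : EveToMove G B P T h w) : TrapLegal G A h (μ w) := by
  refine ⟨w, hh.head, hμ.adj w hh.mem, fun hmem => ?_, hμ.response_allowed w hh.mem⟩
  obtain ⟨w', hw', hadj, hlt⟩ := hh.visited _ hmem (hμ.response_not_mem w hh.mem)
  have hne : w' ≠ w := by rintro rfl; exact lt_irrefl _ hlt
  exact lt_asymm hlt (hμ.rank_lt w hh.mem w' hadj hne (hμ.subset_allowed hw')).2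

lemma eveToMove_cons {y : V} (hh : EveToMove G B P T h w)
    (hy : TrapLegal G A (μ w :: h) y) : EveToMove G B P T (y :: μ w :: h) y ∧ T y < T w := by
  obtain ⟨c, hc, hcy, hyh, hyA⟩ := hy
  obtain rfl : c = μ w := by simpa using hc.symm
  have hyw : y ≠ w := by
    rintro rfl
    exact hyh (List.mem_cons_of_mem _ (List.mem_of_mem_head? hh.head))
  obtain ⟨hyP, hlt⟩ := hμ.rank_lt w hh.mem y hcy hyw hyA
  refine ⟨⟨rfl, hyP, ?_, ?_, ?_⟩, hlt⟩
  · simp only [List.length_cons]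
    have := hh.odd_length
    omega
  · simp only [List.mem_cons]
    rintro x (rfl | rfl | hx)
    exacts [hμ.subset_region hyP, hμ.response_region w hh.mem, hh.subset x hx]
  · simp only [List.mem_cons]
    rintro x (rfl | rfl | hx) hxP
    · exact absurd hyP hxP
    · exact ⟨w, hh.mem, (hμ.adj w hh.mem).symm, hlt⟩
    · obtain ⟨w', hw', hadj, hlt'⟩ := hh.visited x hx hxP
      exact ⟨w', hw', hadj, hlt.trans hlt'⟩

/-- Each round costs two moves and lowers the rank. -/
lemma exists_stuck [Inhabited V] (τ : List V → V) (v : V) :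
    ∀ m w, EveToMove G B P T (trapPlay G A (μ ∘ List.headI) τ v m) w →
      ∃ m', (trapPlay G A (μ ∘ List.headI) τ v m').length % 2 = 0 ∧
        ¬ TrapLegal G A (trapPlay G A (μ ∘ List.headI) τ v m')
          (τ (trapPlay G A (μ ∘ List.headI) τ v m')) ∧
        (∀ x ∈ trapPlay G A (μ ∘ List.headI) τ v m', x ∈ B) ∧
        (trapPlay G A (μ ∘ List.headI) τ v m').length + 1 ≤
          (trapPlay G A (μ ∘ List.headI) τ v m).length + 2 * T w := by
  intro m w hh
  induction hT : T w using Nat.strong_induction_on generalizing m w with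
  | _ k ih =>
  set hist := trapPlay G A (μ ∘ List.headI) τ v m
  have hσ : (μ ∘ List.headI) hist = μ w := by
    rw [Function.comp_apply, List.eq_cons_of_mem_head? hh.head]
    rfl
  have h₁ : trapPlay G A (μ ∘ List.headI) τ v (m + 1) = μ w :: hist := by
    rw [trapPlay_succ_of_odd_s7 hh.odd_length (hσ ▸ hμ.trapLegal hh), hσ]
  have hpos := hμ.rank_pos w hh.mem
  have hlen := hh.odd_length
  by_cases hleg : TrapLegal G A (μ w :: hist) (τ (μ w :: hist))
  · obtain ⟨hh₂, hlt⟩ := hμ.eveToMove_cons hh hleg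
    have h₂ : trapPlay G A (μ ∘ List.headI) τ v (m + 2) = τ (μ w :: hist) :: μ w :: hist := by
      rw [trapPlay_succ_of_even_s7 (by rw [h₁, List.length_cons]; omega) (h₁ ▸ hleg), h₁]
    obtain ⟨m', hm'⟩ := ih _ (hT ▸ hlt) (m + 2) _ (h₂ ▸ hh₂) rfl
    refine ⟨m', hm'.1, hm'.2.1, hm'.2.2.1, ?_⟩
    have := hm'.2.2.2
    rw [h₂, List.length_cons, List.length_cons] at this
    omega
  · refine ⟨m + 1, ?_, h₁ ▸ hleg, ?_, ?_⟩
    · rw [h₁, List.length_cons]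
      omega
    · rw [h₁]
      simp only [List.mem_cons]
      rintro x (rfl | hx)
      exacts [hμ.response_region w hh.mem, hh.subset x hx]
    · rw [h₁, List.length_cons]
      omega

theorem exists_win [Inhabited V] (τ : List V → V) {v : V} (hv : v ∈ P) :
    ∃ m, (trapPlay G A (μ ∘ List.headI) τ v m).length % 2 = 0 ∧
      ¬ TrapLegal G A (trapPlay G A (μ ∘ List.headI) τ v m)
        (τ (trapPlay G A (μ ∘ List.headI) τ v m)) ∧
      (∀ x ∈ trapPlay G A (μ ∘ List.headI) τ v m, x ∈ B) ∧
      (trapPlay G A (μ ∘ List.headI) τ v m).length ≤ 2 * T v := by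
  have hstart : EveToMove G B P T [v] v :=
    ⟨rfl, hv, rfl, by simpa using hμ.subset_region hv, by simp [hv]⟩
  obtain ⟨m, hlen, hstuck, hB, hbudget⟩ := hμ.exists_stuck τ v 0 v hstart
  refine ⟨m, hlen, hstuck, hB, ?_⟩
  simp only [trapPlay, List.length_singleton] at hbudget
  omega

end RankedResponse

end Trap

section Response

variable {d : ℕ} {u : BV d} {n : ℕ}

noncomputable def boxResponse (d : ℕ) (u : BV d) (n : ℕ) (S : Set (BV d)) (w : BV d) : BV d :=
  Classical.epsilon (IsBoxCertificate d u n S w)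

lemma rankedResponse_boxResponse (hd : 0 < d) (hu : isOddV u) {closed S : Set (BV d)}
    (hS : S ⊆ boxO d u n ∩ closed) (hgood_even : ∀ w ∈ boxE d u n, w ∉ closed) :
    RankedResponse (bccGraph d) {x | x ∉ closed} (boxB d u n)
      {w | w ∉ closed ∧ ∃ r, w ∈ (boxStep d u n)^[r] S} (boxTime d u n S)
      (boxResponse d u n S) := by
  have hSO : S ⊆ boxO d u n := fun x hx => (hS hx).1
  have hspec : ∀ w ∈ {w | w ∉ closed ∧ ∃ r, w ∈ (boxStep d u n)^[r] S},
      0 < boxTime d u n S w ∧ IsBoxCertificate d u n S w (boxResponse d u n S w) := by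
    rintro w ⟨hw, r, hr⟩
    obtain ⟨hpos, hx⟩ := exists_isBoxCertificate hr fun hwS => hw (hS hwS).2
    exact ⟨hpos, Classical.epsilon_spec hx⟩
  refine ⟨fun w hw => hw.1, fun w ⟨_, r, hr⟩ => Or.inl (boxStep_iterate_subset_boxO hSO r hr),
    fun w hw => (hspec w hw).1, fun w hw => (hspec w hw).2.2.1.symm,
    fun w hw => hgood_even _ (hspec w hw).2.1, fun w hw => Or.inr (hspec w hw).2.1, ?_, ?_⟩
  · rintro w hw ⟨-, r, hr⟩
    exact not_isEvenV_of_isOddV hd (isOddV_of_mem_boxO hu (boxStep_iterate_subset_boxO hSO r hr))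
      (hspec w hw).2.1.1
  · intro w hw y hy hyw hyA
    have hyT := (hspec w hw).2.2.2 y hy hyw
    have := boxTime_le hyT
    have := (hspec w hw).1
    exact ⟨⟨hyA, _, hyT⟩, by omega⟩

end Response

theorem eve_wins_in_good_box_general (d : ℕ) (hd : 0 < d)
    (closed : Set (BV d)) (u : BV d) (hu : isOddV u) (n : ℕ)
    (hgood_even : ∀ w ∈ boxE d u n, w ∉ closed)
    (v : BV d) (hv : v ∈ boxO d u n) (hvopen : v ∉ closed)
    (t : ℕ) (hvt : v ∈ (frobStep d)^[t] (boxO d u n ∩ closed)) :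
    ∃ σ : List (BV d) → BV d, ∀ τ : List (BV d) → BV d, ∃ m : ℕ,
      (trapPlay (bccGraph d) {x | x ∉ closed} σ τ v m).length % 2 = 0 ∧
      ¬ TrapLegal (bccGraph d) {x | x ∉ closed}
          (trapPlay (bccGraph d) {x | x ∉ closed} σ τ v m)
          (τ (trapPlay (bccGraph d) {x | x ∉ closed} σ τ v m)) ∧
      (∀ x ∈ trapPlay (bccGraph d) {x | x ∉ closed} σ τ v m, x ∈ boxB d u n) ∧
      (trapPlay (bccGraph d) {x | x ∉ closed} σ τ v m).length ≤ 2 * t := by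
  have hvt' : v ∈ (boxStep d u n)^[t] (boxO d u n ∩ closed) :=
    mem_boxStep_iterate_of_mem_frobStep_iterate hd hu Set.inter_subset_left hv hvt
  have hμ := rankedResponse_boxResponse hd hu subset_rfl hgood_even
  refine ⟨boxResponse d u n (boxO d u n ∩ closed) ∘ List.headI, fun τ => ?_⟩
  obtain ⟨m, hlen, hstuck, hbox, hbudget⟩ := hμ.exists_win τ ⟨hvopen, t, hvt'⟩
  exact ⟨m, hlen, hstuck, hbox, hbudget.trans (Nat.mul_le_mul_left 2 (boxTime_le hvt'))⟩

/-- Suppose the box `B̃(u,n)` is good: all its even vertices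
are open, and its odd part is internally spanned by the Fröbose dynamics
started from the closed odd vertices inside it.  Then for every open odd
vertex `v` of the box that is occupied at time `t` of the internal dynamics,
Eve (the first player, since the game starts at an odd vertex) has a winning
strategy in Trap (moves are to open, unvisited vertices of `𝔹ᵈ`) that keeps
the token inside `B̃(u,n)` and uses at most `t` moves of Eve (the final
history, in which Odin is stuck, has length at most `2t`). -/
theorem eve_wins_in_good_box (d : ℕ) (hd : 0 < d)
    (closed : Set (BV d)) (u : BV d) (hu : isOddV u) (n : ℕ) (hn : 0 < n)
    (hgood_even : ∀ w ∈ boxE d u n, w ∉ closed)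
    (hgood_spanned : ∀ v ∈ boxO d u n,
      ∃ t : ℕ, v ∈ (frobStep d)^[t] (boxO d u n ∩ closed))
    (v : BV d) (hv : v ∈ boxO d u n) (hvopen : v ∉ closed)
    (t : ℕ) (hvt : v ∈ (frobStep d)^[t] (boxO d u n ∩ closed)) :
    ∃ σ : List (BV d) → BV d, ∀ τ : List (BV d) → BV d, ∃ m : ℕ,
      (trapPlay (bccGraph d) {x | x ∉ closed} σ τ v m).length % 2 = 0 ∧
      ¬ TrapLegal (bccGraph d) {x | x ∉ closed}
          (trapPlay (bccGraph d) {x | x ∉ closed} σ τ v m)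
          (τ (trapPlay (bccGraph d) {x | x ∉ closed} σ τ v m)) ∧
      (∀ x ∈ trapPlay (bccGraph d) {x | x ∉ closed} σ τ v m, x ∈ boxB d u n) ∧
      (trapPlay (bccGraph d) {x | x ∉ closed} σ τ v m).length ≤ 2 * t :=
  eve_wins_in_good_box_general d hd closed u hu n hgood_even v hv hvopen t hvt
end

section
/- In the diamond D_n, suppose that in each odd row R_j ∩ Q of the top-right quadrant Q there exists a closed vertex ⟨i,j⟩ with i ∉ {1, 2n−1}. Then there exists a matching M of Q such that: (i) every open odd vertex of Q is matched; and (iii) every vertex ⟨2n−1, j⟩ in the rightmost column of Q is matched to ⟨2n−2, j−1⟩. -/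
/-- The top-right quadrant `Q` of the diamond `D_n`: the vertices with column
index `i = u.1 + u.2 ∈ [1, 2n-1]` and row index `j = u.2 - u.1 ∈ [0, 2n-1]`. -/
def quadrant (n : ℕ) : Set (ℤ × ℤ) :=
  {u | 1 ≤ u.1 + u.2 ∧ u.1 + u.2 ≤ 2 * n - 1 ∧ 0 ≤ u.2 - u.1 ∧ u.2 - u.1 ≤ 2 * n - 1}

/-! Every odd vertex `⟨i, j⟩` of `Q` lies in an odd row `j`, which contains a chosen closed vertex
`⟨c_j, j⟩` with `c_j` odd and `c_j < 2n - 1`. Match each other odd vertex of row `j` into the even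
row `j - 1`: to `⟨i - 1, j - 1⟩` if `i > c_j` and to `⟨i + 1, j - 1⟩` if `i < c_j`. As `i` and `c_j`
are both odd, the partners from the right of `c_j` lie in columns `≥ c_j + 1` and those from the
left in columns `≤ c_j - 1`, so distinct odd vertices get distinct (even) partners. The rightmost
column `i = 2n - 1` lies right of every `c_j`, hence is matched down-left. -/

namespace SimpleGraph.Subgraph

variable {V : Type*} {G : SimpleGraph V}

@[simps verts]
def ofPartner (s : Set V) (p : V → V) (hadj : ∀ u ∈ s, G.Adj u (p u)) : G.Subgraph where
  verts := s ∪ p '' s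
  Adj a b := ∃ u ∈ s, s(a, b) = s(u, p u)
  adj_sub := by
    rintro a b ⟨u, hu, hab⟩
    exact (G.mem_edgeSet).1 (hab ▸ (G.mem_edgeSet).2 (hadj u hu))
  edge_vert := by
    rintro a b ⟨u, hu, hab⟩
    rcases Sym2.eq_iff.1 hab with ⟨rfl, -⟩ | ⟨rfl, -⟩
    exacts [Or.inl hu, Or.inr ⟨u, hu, rfl⟩]
  symm := ⟨fun _ _ ⟨u, hu, hab⟩ => ⟨u, hu, Sym2.eq_swap.trans hab⟩⟩

variable {s : Set V} {p : V → V} {hadj : ∀ u ∈ s, G.Adj u (p u)}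

lemma ofPartner_adj {a b : V} :
    (ofPartner s p hadj).Adj a b ↔ ∃ u ∈ s, s(a, b) = s(u, p u) :=
  Iff.rfl

lemma ofPartner_adj_self {u : V} (hu : u ∈ s) : (ofPartner s p hadj).Adj u (p u) :=
  ofPartner_adj.2 ⟨u, hu, rfl⟩

lemma isMatching_ofPartner (hinj : s.InjOn p) (hdisj : Disjoint s (p '' s)) :
    (ofPartner s p hadj).IsMatching := by
  rintro v (hv | ⟨u, hu, rfl⟩)
  · refine ⟨p v, ofPartner_adj_self hv, fun w hw => ?_⟩
    obtain ⟨u, hu, hvw⟩ := ofPartner_adj.1 hw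
    rcases Sym2.eq_iff.1 hvw with ⟨rfl, rfl⟩ | ⟨hvu, -⟩
    · rfl
    · exact absurd hvu (hdisj.ne_of_mem hv ⟨u, hu, rfl⟩)
  · refine ⟨u, (ofPartner_adj_self hu).symm, fun w hw => ?_⟩
    obtain ⟨u', hu', hvw⟩ := ofPartner_adj.1 hw
    rcases Sym2.eq_iff.1 hvw with ⟨hvu, -⟩ | ⟨hvu, rfl⟩
    · exact absurd hvu.symm (hdisj.ne_of_mem hu' ⟨u, hu, rfl⟩)
    · exact hinj hu' hu hvu.symm

end SimpleGraph.Subgraph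

local notation "col " u:max => Prod.fst u + Prod.snd u
local notation "row " u:max => Prod.snd u - Prod.fst u

lemma eq_of_col_eq_of_row_eq {a b : ℤ × ℤ} (hcol : col a = col b) (hrow : row a = row b) :
    a = b :=
  Prod.ext (by omega) (by omega)

lemma odd_row_of_mem_quadrant {n : ℕ} {u : ℤ × ℤ} (hu : u ∈ quadrant n) (hodd : Odd (col u)) :
    Odd (row u) ∧ 1 ≤ row u ∧ row u ≤ 2 * n - 1 := by
  obtain ⟨-, -, h0, hle⟩ := hu
  obtain ⟨k, hk⟩ := hodd
  exact ⟨⟨u.2 - k - 1, by omega⟩, by omega, hle⟩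

def SelectsInOddRows (n : ℕ) (w : ℤ → ℤ × ℤ) : Prop :=
  ∀ j : ℤ, Odd j → 1 ≤ j → j ≤ 2 * n - 1 → w j ∈ quadrant n ∧ row (w j) = j

def quadrantPartner (w : ℤ → ℤ × ℤ) (u : ℤ × ℤ) : ℤ × ℤ :=
  if col (w (row u)) < col u then (u.1, u.2 - 1) else (u.1 + 1, u.2)

def matchedOddVertices (n : ℕ) (w : ℤ → ℤ × ℤ) : Set (ℤ × ℤ) :=
  {u | u ∈ quadrant n ∧ Odd (col u) ∧ u ≠ w (row u)}

lemma gridGraph_adj_quadrantPartner (w : ℤ → ℤ × ℤ) (u : ℤ × ℤ) :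
    gridGraph.Adj u (quadrantPartner w u) := by
  unfold quadrantPartner
  split_ifs <;> simp [gridGraph]

lemma row_quadrantPartner (w : ℤ → ℤ × ℤ) (u : ℤ × ℤ) :
    row (quadrantPartner w u) = row u - 1 := by
  unfold quadrantPartner
  split_ifs <;> dsimp only <;> ring

lemma even_col_quadrantPartner (w : ℤ → ℤ × ℤ) {u : ℤ × ℤ} (hu : Odd (col u)) :
    Even (col (quadrantPartner w u)) := by
  obtain ⟨k, hk⟩ := hu
  unfold quadrantPartner
  split_ifs
  exacts [⟨k, by dsimp only; omega⟩, ⟨k + 1, by dsimp only; omega⟩]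

lemma quadrantPartner_of_lt {w : ℤ → ℤ × ℤ} {u : ℤ × ℤ} (h : col (w (row u)) < col u) :
    quadrantPartner w u = (u.1, u.2 - 1) :=
  if_pos h

section

variable {n : ℕ} {w : ℤ → ℤ × ℤ}

lemma SelectsInOddRows.of_mem_matchedOddVertices (hw : SelectsInOddRows n w) {u : ℤ × ℤ}
    (hu : u ∈ matchedOddVertices n w) :
    w (row u) ∈ quadrant n ∧ Odd (col (w (row u))) ∧ col (w (row u)) ≠ col u := by
  obtain ⟨huQ, hodd, hne⟩ := hu
  obtain ⟨hrow, hrow1, hrow2⟩ := odd_row_of_mem_quadrant huQ hodd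
  obtain ⟨hwQ, hwrow⟩ := hw _ hrow hrow1 hrow2
  refine ⟨hwQ, ?_, fun hcol => hne (eq_of_col_eq_of_row_eq hcol hwrow).symm⟩
  obtain ⟨k, hk⟩ := hrow
  exact ⟨(w (row u)).2 - k - 1, by omega⟩

lemma quadrantPartner_mem_quadrant (hw : SelectsInOddRows n w) {u : ℤ × ℤ}
    (hu : u ∈ matchedOddVertices n w) : quadrantPartner w u ∈ quadrant n := by
  obtain ⟨⟨hw1, hw2, -, -⟩, ⟨k, hk⟩, hne⟩ := hw.of_mem_matchedOddVertices hu
  obtain ⟨⟨hu1, hu2, hu3, hu4⟩, ⟨l, hl⟩, -⟩ := hu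
  unfold quadrantPartner
  split_ifs <;> refine ⟨?_, ?_, ?_, ?_⟩ <;> dsimp only <;> omega

lemma quadrantPartner_injOn (hw : SelectsInOddRows n w) :
    (matchedOddVertices n w).InjOn (quadrantPartner w) := by
  intro u hu u' hu' heq
  have hrow : row u = row u' := by
    have h : row (quadrantPartner w u) = row (quadrantPartner w u') := by rw [heq]
    rwa [row_quadrantPartner, row_quadrantPartner, sub_left_inj] at h
  refine eq_of_col_eq_of_row_eq ?_ hrow
  have hne := (hw.of_mem_matchedOddVertices hu).2.2
  obtain ⟨-, ⟨k, hk⟩, hne'⟩ := hw.of_mem_matchedOddVertices hu'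
  obtain ⟨-, ⟨l, hl⟩, -⟩ := hu
  obtain ⟨-, ⟨l', hl'⟩, -⟩ := hu'
  unfold quadrantPartner at heq
  rw [hrow] at heq hne
  split_ifs at heq <;> simp only [Prod.mk.injEq] at heq <;> omega

lemma disjoint_matchedOddVertices_image :
    Disjoint (matchedOddVertices n w) (quadrantPartner w '' matchedOddVertices n w) :=
  Set.disjoint_left.2 fun _ hu ⟨_, hv, hvu⟩ =>
    Int.not_even_iff_odd.2 hu.2.1 (hvu ▸ even_col_quadrantPartner w hv.2.1)

lemma mem_matchedOddVertices_of_not_mem {closed : Set (ℤ × ℤ)}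
    (hclosed : ∀ j : ℤ, Odd j → 1 ≤ j → j ≤ 2 * n - 1 → w j ∈ closed) {u : ℤ × ℤ}
    (hu : u ∈ quadrant n) (hodd : Odd (col u)) (hopen : u ∉ closed) :
    u ∈ matchedOddVertices n w := by
  obtain ⟨hrow, hrow1, hrow2⟩ := odd_row_of_mem_quadrant hu hodd
  exact ⟨hu, hodd, fun h => hopen (h ▸ hclosed _ hrow hrow1 hrow2)⟩

lemma quadrantPartner_of_col_eq (hw : SelectsInOddRows n w)
    (hright : ∀ j : ℤ, Odd j → 1 ≤ j → j ≤ 2 * n - 1 → col (w j) ≠ 2 * n - 1) {u : ℤ × ℤ}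
    (hu : u ∈ quadrant n) (hcol : col u = 2 * n - 1) :
    u ∈ matchedOddVertices n w ∧ quadrantPartner w u = (u.1, u.2 - 1) := by
  have hodd : Odd (col u) := hcol ▸ ⟨(n : ℤ) - 1, by ring⟩
  obtain ⟨hrow, hrow1, hrow2⟩ := odd_row_of_mem_quadrant hu hodd
  obtain ⟨⟨-, hwcol, -, -⟩, -⟩ := hw _ hrow hrow1 hrow2
  have hlt : col (w (row u)) < col u := by
    have := hright _ hrow hrow1 hrow2
    omega
  exact ⟨⟨hu, hodd, fun h => hlt.ne (h ▸ rfl)⟩, quadrantPartner_of_lt hlt⟩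

end

theorem quadrant_matching_all_open_odd_general
    (n : ℕ) (closed : Set (ℤ × ℤ))
    (hrows : ∀ j : ℤ, Odd j → 1 ≤ j → j ≤ 2 * n - 1 →
      ∃ u ∈ quadrant n ∩ closed, u.2 - u.1 = j ∧ u.1 + u.2 ≠ 1 ∧ u.1 + u.2 ≠ 2 * n - 1) :
    ∃ M : gridGraph.Subgraph, M.verts ⊆ quadrant n ∧ M.IsMatching ∧
      (∀ u ∈ quadrant n, Odd (u.1 + u.2) → u ∉ closed → u ∈ M.verts) ∧
      (∀ u ∈ quadrant n, u.1 + u.2 = 2 * n - 1 → M.Adj u (u.1, u.2 - 1)) := by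
  choose! w hwQ hwrow _ hwright using hrows
  have hw : SelectsInOddRows n w := fun j hj h1 h2 => ⟨(hwQ j hj h1 h2).1, hwrow j hj h1 h2⟩
  refine ⟨.ofPartner (matchedOddVertices n w) (quadrantPartner w)
      (fun u _ => gridGraph_adj_quadrantPartner w u), ?_,
    SimpleGraph.Subgraph.isMatching_ofPartner (quadrantPartner_injOn hw)
      disjoint_matchedOddVertices_image, ?_, ?_⟩
  · rw [SimpleGraph.Subgraph.ofPartner_verts, Set.union_subset_iff, Set.image_subset_iff]
    exact ⟨fun u hu => hu.1, fun u hu => quadrantPartner_mem_quadrant hw hu⟩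
  · exact fun u hu hodd hopen => Or.inl <|
      mem_matchedOddVertices_of_not_mem (fun j hj h1 h2 => (hwQ j hj h1 h2).2) hu hodd hopen
  · intro u hu hcol
    obtain ⟨hmem, hpartner⟩ := quadrantPartner_of_col_eq hw hwright hu hcol
    exact hpartner ▸ SimpleGraph.Subgraph.ofPartner_adj_self hmem

/-- Suppose each odd row of the quadrant `Q` (rows of odd
index `j ∈ [1, 2n-1]`) contains a closed vertex whose column index is neither
`1` nor `2n-1`.  Then there is a matching `M` of `Q` such that every open odd
vertex of `Q` is matched, and every vertex of the rightmost column
(column index `2n-1`) is matched down-left, i.e. `⟨2n-1, j⟩ = (u.1, u.2)` is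
matched to `⟨2n-2, j-1⟩ = (u.1, u.2 - 1)`. -/
theorem quadrant_matching_all_open_odd
    (n : ℕ) (hn : 0 < n) (closed : Set (ℤ × ℤ))
    (hco : ∀ u ∈ closed, Odd (u.1 + u.2))
    (hrows : ∀ j : ℤ, Odd j → 1 ≤ j → j ≤ 2 * n - 1 →
      ∃ u ∈ quadrant n ∩ closed, u.2 - u.1 = j ∧ u.1 + u.2 ≠ 1 ∧ u.1 + u.2 ≠ 2 * n - 1) :
    ∃ M : gridGraph.Subgraph, M.verts ⊆ quadrant n ∧ M.IsMatching ∧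
      (∀ u ∈ quadrant n, Odd (u.1 + u.2) → u ∉ closed → u ∈ M.verts) ∧
      (∀ u ∈ quadrant n, u.1 + u.2 = 2 * n - 1 → M.Adj u (u.1, u.2 - 1)) :=
  quadrant_matching_all_open_odd_general n closed hrows
end

section
/- Let G be a finite connected simple graph and v a vertex that is unmatched in some maximum matching of G. Then for every neighbor w of v, every maximum matching of G \ {v} matches w. Moreover, maximum matchings of G and of G \ {v} have the same cardinality. -/
variable {V : Type*}

/-- `N` is a maximum matching of the induced subgraph `G \ {v}`; matchings of
`G \ {v}` are identified with matchings of `G` not containing `v`. -/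
def IsMaxMatchingAvoiding (G : SimpleGraph V) (v : V) (N : G.Subgraph) : Prop :=
  N.IsMatching ∧ v ∉ N.verts ∧
    ∀ N' : G.Subgraph, N'.IsMatching → v ∉ N'.verts → N'.verts.ncard ≤ N.verts.ncard

/-- Let `G` be a finite connected simple graph and `v` a
vertex unmatched in some maximum matching of `G`.  Then every maximum matching
of `G \ {v}` matches every neighbour `w` of `v`; moreover maximum matchings of
`G` and of `G \ {v}` have the same cardinality. -/
theorem maxMatching_deleteVert_of_unmatched [Fintype V]
    (G : SimpleGraph V) (hG : G.Connected) (v : V)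
    (hv : ∃ M : G.Subgraph, IsMaxMatching G M ∧ v ∉ M.verts) :
    (∀ w : V, G.Adj v w → ∀ N : G.Subgraph, IsMaxMatchingAvoiding G v N →
      w ∈ N.verts) ∧
    (∀ N : G.Subgraph, IsMaxMatchingAvoiding G v N →
      ∀ M : G.Subgraph, IsMaxMatching G M → N.verts.ncard = M.verts.ncard) := by
  classical
  obtain ⟨M₀, hM₀, hvM₀⟩ := hv
  -- Any max matching avoiding v has the same ncard as M₀
  have key : ∀ N : G.Subgraph, IsMaxMatchingAvoiding G v N →
      N.verts.ncard = M₀.verts.ncard := by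
    intro N hN
    exact le_antisymm (hM₀.2 N hN.1) (hN.2.2 M₀ hM₀.1 hvM₀)
  constructor
  · intro w hadj N hN
    by_contra hw
    have hvw : v ≠ w := hadj.ne
    set E := G.subgraphOfAdj hadj with hE
    have hEm : E.IsMatching := SimpleGraph.Subgraph.IsMatching.subgraphOfAdj hadj
    have hdisj : Disjoint N.support E.support := by
      rw [hN.1.support_eq_verts, hEm.support_eq_verts]
      rw [Set.disjoint_right]
      intro x hx
      simp only [hE, SimpleGraph.subgraphOfAdj_verts, Set.mem_insert_iff,
        Set.mem_singleton_iff] at hx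
      rcases hx with rfl | rfl
      · exact hN.2.1
      · exact hw
    have hsup : (N ⊔ E).IsMatching := hN.1.sup hEm hdisj
    have hcard : (N ⊔ E).verts.ncard = N.verts.ncard + 2 := by
      have hverts : (N ⊔ E).verts = N.verts ∪ {v, w} := by
        simp [hE]
      rw [hverts, Set.ncard_union_eq ?_ (Set.toFinite _) (Set.toFinite _)]
      · rw [Set.ncard_pair hvw]
      · rw [Set.disjoint_right]
        intro x hx
        rcases hx with rfl | rfl
        · exact hN.2.1
        · exact hw
    have h1 : (N ⊔ E).verts.ncard ≤ M₀.verts.ncard := hM₀.2 _ hsup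
    have h2 := key N hN
    omega
  · intro N hN M hM
    rw [key N hN]
    exact le_antisymm (hM.2 M₀ hM₀.1) (hM₀.2 M hM.1)
end

section
/- Let G be a finite graph and v a vertex such that some maximum independent set of G does not contain v. Among maximum independent sets not containing v, let I be one containing the fewest neighbors of v, let W be the set of neighbors of v not in I, and let w be any neighbor of v in I (such w exists). Then every maximum independent set of the induced subgraph G \ (W ∪ {v}) contains w. -/
/-
A maximum independent set `J` of `G \ (W ∪ {v})` is at least as large as `I`, which is itself
such a set, so `J` is a maximum independent set of `G` avoiding `v`. Since `J` avoids `W`, its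
neighbours of `v` lie among those of `I`; by the minimality of `I` the two neighbourhoods coincide,
and so `J` contains every neighbour `w` of `v` in `I`.
-/

variable {V : Type*}

namespace IsIndep

variable {G : SimpleGraph V} {I : Set V} {v : V}

theorem insert (hI : IsIndep G I) (hv : ∀ w ∈ I, ¬ G.Adj v w) : IsIndep G (insert v I) := by
  rintro a (rfl | ha) b (rfl | hb) hab
  · exact G.loopless.irrefl _ hab
  · exact hv b hb hab
  · exact hv a ha hab.symm
  · exact hI a ha b hb hab

theorem exists_adj_mem_of_maximum [Finite V] (hI : IsIndep G I) (hvI : v ∉ I)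
    (hmax : ∀ J : Set V, IsIndep G J → J.ncard ≤ I.ncard) : ∃ w, G.Adj v w ∧ w ∈ I := by
  by_contra! h
  have hcard := hmax _ (hI.insert fun w hw hvw => h w hvw hw)
  rw [Set.ncard_insert_of_notMem hvI] at hcard
  omega

end IsIndep

theorem mem_every_maxIndep_of_delete_general [Fintype V]
    (G : SimpleGraph V) (v : V)
    (I : Set V) (hIind : IsIndep G I) (hvI : v ∉ I)
    (hImax : ∀ J : Set V, IsIndep G J → J.ncard ≤ I.ncard)
    (hfewest : ∀ J : Set V, IsIndep G J → v ∉ J →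
      (∀ K : Set V, IsIndep G K → K.ncard ≤ J.ncard) →
      ({x ∈ I | G.Adj v x}).ncard ≤ ({x ∈ J | G.Adj v x}).ncard) :
    (∃ w : V, G.Adj v w ∧ w ∈ I) ∧
    (∀ w : V, G.Adj v w → w ∈ I →
      ∀ J : Set V, IsIndep G J →
        J ∩ ({x | G.Adj v x ∧ x ∉ I} ∪ {v}) = ∅ →
        (∀ K : Set V, IsIndep G K →
          K ∩ ({x | G.Adj v x ∧ x ∉ I} ∪ {v}) = ∅ → K.ncard ≤ J.ncard) →
        w ∈ J) := by
  refine ⟨hIind.exists_adj_mem_of_maximum hvI hImax, ?_⟩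
  intro w hvw hwI J hJ hJdel hJmax
  set D : Set V := {x | G.Adj v x ∧ x ∉ I} ∪ {v}
  have hJD : Disjoint J D := Set.disjoint_iff_inter_eq_empty.mpr hJdel
  have hID : I ∩ D = ∅ := by
    refine Set.disjoint_iff_inter_eq_empty.mp (Set.disjoint_left.mpr ?_)
    rintro x hxI (⟨-, hxI'⟩ | rfl)
    exacts [hxI' hxI, hvI hxI]
  have hcard : J.ncard = I.ncard := le_antisymm (hImax J hJ) (hJmax I hIind hID)
  have hvJ : v ∉ J := fun hv => Set.disjoint_left.mp hJD hv (Or.inr rfl)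
  have hsub : {x ∈ J | G.Adj v x} ⊆ {x ∈ I | G.Adj v x} :=
    fun x ⟨hxJ, hvx⟩ =>
      ⟨by_contra fun hxI => Set.disjoint_left.mp hJD hxJ (Or.inl ⟨hvx, hxI⟩), hvx⟩
  have hnbr : {x ∈ J | G.Adj v x} = {x ∈ I | G.Adj v x} :=
    Set.eq_of_subset_of_ncard_le hsub (hfewest J hJ hvJ fun K hK => hcard ▸ hImax K hK)
  exact (hnbr.ge ⟨hwI, hvw⟩).1

/-- Let `G` be a finite graph and `v` a vertex such that
some maximum independent set avoids `v`.  Among maximum independent sets not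
containing `v`, let `I` contain the fewest neighbours of `v`, and let
`W = N(v) \ I`.  Then some neighbour `w` of `v` lies in `I`, and for every
such `w`, every maximum independent set of the induced subgraph
`G \ (W ∪ {v})` contains `w`; independent sets of `G \ (W ∪ {v})` are
identified with independent sets of `G` disjoint from `W ∪ {v}`. -/
theorem mem_every_maxIndep_of_delete [Fintype V]
    (G : SimpleGraph V) (v : V)
    (hex : ∃ J : Set V, IsIndep G J ∧ (∀ K : Set V, IsIndep G K → K.ncard ≤ J.ncard) ∧ v ∉ J)
    (I : Set V) (hIind : IsIndep G I) (hvI : v ∉ I)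
    (hImax : ∀ J : Set V, IsIndep G J → J.ncard ≤ I.ncard)
    (hfewest : ∀ J : Set V, IsIndep G J → v ∉ J →
      (∀ K : Set V, IsIndep G K → K.ncard ≤ J.ncard) →
      ({x ∈ I | G.Adj v x}).ncard ≤ ({x ∈ J | G.Adj v x}).ncard) :
    (∃ w : V, G.Adj v w ∧ w ∈ I) ∧
    (∀ w : V, G.Adj v w → w ∈ I →
      ∀ J : Set V, IsIndep G J →
        J ∩ ({x | G.Adj v x ∧ x ∉ I} ∪ {v}) = ∅ →
        (∀ K : Set V, IsIndep G K →
          K ∩ ({x | G.Adj v x ∧ x ∉ I} ∪ {v}) = ∅ → K.ncard ≤ J.ncard) →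
        w ∈ J) :=
  mem_every_maxIndep_of_delete_general G v I hIind hvI hImax hfewest
end
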